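/- arXiv:2602.23403 — 17 statements merged into one kernel-verified Lean document; each statement's English description precedes it below -/
import Mathlib

section
/- Let G be a connected simple graph. Then G is edge-critical (i.e., every edge of G is distance critical) if and only if every edge of G lies on a convex P3. -/
open SimpleGraph

universe u

variable {V : Type*}

/-- Two vertices `u`, `v` are `X`-visible in `G` if some shortest `u,v`-path meets `X`
only in (a subset of) `{u, v}`. -/
def Visible (G : SimpleGraph V) (X : Set V) (u v : V) : Prop :=
  ∃ p : G.Walk u v, p.length = G.dist u v ∧ ∀ w ∈ p.support, w ∈ X → w = u ∨ w = v

/-- `X` is a mutual-visibility set of `G`: every two vertices of `X` are `X`-visible. -/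
def IsMVSet (G : SimpleGraph V) (X : Set V) : Prop :=
  ∀ u ∈ X, ∀ v ∈ X, Visible G X u v

/-- `X` is a total mutual-visibility set of `G`: every two vertices of `G` are `X`-visible. -/
def IsTotalMVSet (G : SimpleGraph V) (X : Set V) : Prop :=
  ∀ u v : V, Visible G X u v

/-- `X` is an outer mutual-visibility set of `G`. -/
def IsOuterMVSet (G : SimpleGraph V) (X : Set V) : Prop :=
  (∀ u ∈ X, ∀ v ∈ X, Visible G X u v) ∧ (∀ x ∈ X, ∀ y ∉ X, Visible G X x y)

/-- `X` is a dual mutual-visibility set of `G`. -/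
def IsDualMVSet (G : SimpleGraph V) (X : Set V) : Prop :=
  (∀ u ∈ X, ∀ v ∈ X, Visible G X u v) ∧ (∀ u ∉ X, ∀ v ∉ X, Visible G X u v)

/-- A set of vertices is independent if no two of its vertices are adjacent. -/
def IsIndependentSet (G : SimpleGraph V) (X : Set V) : Prop :=
  ∀ u ∈ X, ∀ v ∈ X, ¬ G.Adj u v

/-- `u v w` form a convex `P₃` (with middle vertex `v`): `u` and `w` are nonadjacent
distinct vertices whose unique common neighbor is `v`. -/
def IsConvexP3 (G : SimpleGraph V) (u v w : V) : Prop :=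
  G.Adj u v ∧ G.Adj v w ∧ ¬ G.Adj u w ∧ u ≠ w ∧ ∀ z : V, G.Adj u z → G.Adj z w → z = v

/-- The edge `xy` is distance critical: deleting it strictly increases the distance
(as an extended natural number, so disconnection counts) between some pair of
vertices `{u,v} ≠ {x,y}`. -/
def IsDistCriticalEdge (G : SimpleGraph V) (x y : V) : Prop :=
  ∃ u v : V, ({u, v} : Set V) ≠ ({x, y} : Set V) ∧
    G.edist u v < (G.deleteEdges {s(x, y)}).edist u v

/-- A graph is edge-critical if each of its edges is distance critical. -/
def EdgeCritical (G : SimpleGraph V) : Prop :=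
  ∀ x y : V, G.Adj x y → IsDistCriticalEdge G x y

lemma IsConvexP3.symm {G : SimpleGraph V} {a b c : V} (h : IsConvexP3 G a b c) :
    IsConvexP3 G c b a :=
  ⟨h.2.1.symm, h.1.symm, fun hc => h.2.2.1 hc.symm, h.2.2.2.1.symm,
    fun z h1 h2 => h.2.2.2.2 z h2.symm h1.symm⟩

/-- If `a b c` is a convex `P₃`, then deleting any set of edges containing `ab` or `bc`
strictly increases the (extended) distance between `a` and `c`. -/
lemma edist_lt_of_isConvexP3 {G : SimpleGraph V} {a b c : V} (h : IsConvexP3 G a b c)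
    {s : Set (Sym2 V)} (hs : s(a, b) ∈ s ∨ s(b, c) ∈ s) :
    G.edist a c < (G.deleteEdges s).edist a c := by
  obtain ⟨hab, hbc, hac, hne, huniq⟩ := h
  have hub : G.edist a c ≤ 2 := by
    simpa using SimpleGraph.edist_le (Walk.cons hab (Walk.cons hbc Walk.nil))
  by_contra hcon
  push_neg at hcon
  have h2 : (G.deleteEdges s).edist a c ≤ 2 := hcon.trans hub
  have hne_top : (G.deleteEdges s).edist a c ≠ ⊤ := by
    intro ht; rw [ht] at h2; exact (by simp : ¬ (⊤ : ℕ∞) ≤ 2) h2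
  obtain ⟨p, hp⟩ := SimpleGraph.exists_walk_of_edist_ne_top hne_top
  have hlen : (p.length : ℕ∞) ≤ 2 := by rw [hp]; exact h2
  have hlen' : p.length ≤ 2 := by exact_mod_cast hlen
  cases p with
  | nil => exact hne rfl
  | cons h1 q =>
    cases q with
    | nil => exact hac (SimpleGraph.deleteEdges_adj.mp h1).1
    | cons h2 r =>
      cases r with
      | nil =>
        obtain ⟨h1', hs1⟩ := SimpleGraph.deleteEdges_adj.mp h1
        obtain ⟨h2', hs2⟩ := SimpleGraph.deleteEdges_adj.mp h2
        have hz := huniq _ h1' h2'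
        subst hz
        rcases hs with hmem | hmem
        · exact hs1 hmem
        · exact hs2 hmem
      | cons h3 r' =>
        rw [Walk.length_cons, Walk.length_cons, Walk.length_cons] at hlen'
        omega

/-- Key lemma for the forward direction: if no convex `P₃` contains the edge `xy`,
then every shortest path whose endpoint pair differs from `{x,y}` can be rerouted
avoiding the edge `xy`, keeping the same length. -/
lemma exists_walk_avoiding {G : SimpleGraph V} (hG : G.Connected) {x y : V} (hxy : G.Adj x y)
    (H : ¬ ∃ w : V, IsConvexP3 G w x y ∨ IsConvexP3 G x y w) :
    ∀ {u v : V} (p : G.Walk u v), p.IsPath → p.length = G.dist u v →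
      ({u, v} : Set V) ≠ ({x, y} : Set V) →
      ∃ q : (G.deleteEdges {s(x, y)}).Walk u v, q.length = p.length := by
  intro u v p
  induction p with
  | nil => exact fun _ _ _ => ⟨Walk.nil, rfl⟩
  | @cons u a v h p' ih =>
    intro hpath hlen hne
    rw [Walk.cons_isPath_iff] at hpath
    obtain ⟨hpath', hu_supp⟩ := hpath
    rw [Walk.length_cons] at hlen
    -- the tail of a shortest path is shortest
    have hp'len : p'.length = G.dist a v := by
      obtain ⟨q0, hq0⟩ := (Walk.reachable p').exists_walk_length_eq_dist
      have h1 : G.dist u v ≤ q0.length + 1 := by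
        simpa using SimpleGraph.dist_le (Walk.cons h q0)
      have h2 : G.dist a v ≤ p'.length := SimpleGraph.dist_le p'
      omega
    by_cases he : s(u, a) = s(x, y)
    · -- the first edge is the deleted edge
      rw [Sym2.eq_iff] at he
      have huv : u ≠ v := by
        intro huv; subst huv
        have : G.dist u u = 0 := by simp
        omega
      rcases he with ⟨hux, hay⟩ | ⟨huy, hax⟩
      · obtain rfl : x = u := hux.symm
        obtain rfl : y = a := hay.symm
        have hvy : v ≠ y := by
          intro hv; subst hv; exact hne rfl
        -- p' is nonempty since y ≠ v
        cases p' with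
        | nil => exact absurd rfl hvy.symm
        | @cons _ b _ h2 p'' =>
          rw [Walk.length_cons] at hlen hp'len
          rw [Walk.cons_isPath_iff] at hpath'
          obtain ⟨hpath'', hy_supp⟩ := hpath'
          have hdxb : G.dist x b = 2 := by
            have hub2 : G.dist x b ≤ 2 := by
              simpa using SimpleGraph.dist_le (Walk.cons h (Walk.cons h2 Walk.nil))
            have htr : G.dist x v ≤ G.dist x b + G.dist b v := hG.dist_triangle
            have hbv : G.dist b v ≤ p''.length := SimpleGraph.dist_le p''
            omega
          have hnxb : ¬ G.Adj x b := by
            intro hadj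
            rw [← SimpleGraph.dist_eq_one_iff_adj] at hadj
            omega
          have hxb : x ≠ b := by
            intro hxb; subst hxb
            have : G.dist x x = 0 := by simp
            omega
          by_cases huniq : ∀ z, G.Adj x z → G.Adj z b → z = y
          · exact absurd ⟨b, Or.inr ⟨hxy, h2, hnxb, hxb, huniq⟩⟩ H
          · push_neg at huniq
            obtain ⟨z, hz1, hz2, hz3⟩ := huniq
            have ha1 : (G.deleteEdges {s(x, y)}).Adj x z := by
              rw [SimpleGraph.deleteEdges_adj]
              refine ⟨hz1, ?_⟩
              simp only [Set.mem_singleton_iff, Sym2.eq_iff]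
              rintro (⟨-, h'⟩ | ⟨h', -⟩)
              · exact hz3 h'
              · exact hxy.ne h'
            have ha2 : (G.deleteEdges {s(x, y)}).Adj z b := by
              rw [SimpleGraph.deleteEdges_adj]
              refine ⟨hz2, ?_⟩
              simp only [Set.mem_singleton_iff, Sym2.eq_iff]
              rintro (⟨h', -⟩ | ⟨h', -⟩)
              · exact hz1.ne' h'
              · exact hz3 h'
            have hsub : ∀ e ∈ p''.edges, e ∈ (G.deleteEdges {s(x, y)}).edgeSet := by
              intro e hemem
              rw [SimpleGraph.edgeSet_deleteEdges, Set.mem_diff]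
              refine ⟨p''.edges_subset_edgeSet hemem, ?_⟩
              simp only [Set.mem_singleton_iff]
              intro hexy; subst hexy
              have hx' : x ∈ p''.support := Walk.fst_mem_support_of_mem_edges p'' hemem
              exact hu_supp (by rw [Walk.support_cons]; exact List.mem_cons_of_mem _ hx')
            refine ⟨Walk.cons ha1 (Walk.cons ha2 (p''.transfer _ hsub)), ?_⟩
            simp [Walk.length_transfer]
      · obtain rfl : y = u := huy.symm
        obtain rfl : x = a := hax.symm
        have hvx : v ≠ x := by
          intro hv; subst hv
          exact hne (by ext z; simp [Set.mem_insert_iff]; tauto)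
        cases p' with
        | nil => exact absurd rfl hvx.symm
        | @cons _ b _ h2 p'' =>
          rw [Walk.length_cons] at hlen hp'len
          rw [Walk.cons_isPath_iff] at hpath'
          obtain ⟨hpath'', hx_supp⟩ := hpath'
          have hdyb : G.dist y b = 2 := by
            have hub2 : G.dist y b ≤ 2 := by
              simpa using SimpleGraph.dist_le (Walk.cons h (Walk.cons h2 Walk.nil))
            have htr : G.dist y v ≤ G.dist y b + G.dist b v := hG.dist_triangle
            have hbv : G.dist b v ≤ p''.length := SimpleGraph.dist_le p''
            omega
          have hnyb : ¬ G.Adj y b := by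
            intro hadj
            rw [← SimpleGraph.dist_eq_one_iff_adj] at hadj
            omega
          have hyb : y ≠ b := by
            intro hyb; subst hyb
            have : G.dist y y = 0 := by simp
            omega
          by_cases huniq : ∀ z, G.Adj y z → G.Adj z b → z = x
          · exact absurd ⟨b, Or.inl (IsConvexP3.symm ⟨h, h2, hnyb, hyb, huniq⟩)⟩ H
          · push_neg at huniq
            obtain ⟨z, hz1, hz2, hz3⟩ := huniq
            have ha1 : (G.deleteEdges {s(x, y)}).Adj y z := by
              rw [SimpleGraph.deleteEdges_adj]
              refine ⟨hz1, ?_⟩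
              simp only [Set.mem_singleton_iff, Sym2.eq_iff]
              rintro (⟨h', -⟩ | ⟨-, h'⟩)
              · exact hxy.ne h'.symm
              · exact hz3 h'
            have ha2 : (G.deleteEdges {s(x, y)}).Adj z b := by
              rw [SimpleGraph.deleteEdges_adj]
              refine ⟨hz2, ?_⟩
              simp only [Set.mem_singleton_iff, Sym2.eq_iff]
              rintro (⟨h', -⟩ | ⟨h', -⟩)
              · exact hz3 h'
              · exact hz1.ne' h'
            have hsub : ∀ e ∈ p''.edges, e ∈ (G.deleteEdges {s(x, y)}).edgeSet := by
              intro e hemem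
              rw [SimpleGraph.edgeSet_deleteEdges, Set.mem_diff]
              refine ⟨p''.edges_subset_edgeSet hemem, ?_⟩
              simp only [Set.mem_singleton_iff]
              intro hexy; subst hexy
              have hy' : y ∈ p''.support := Walk.snd_mem_support_of_mem_edges p'' hemem
              exact hu_supp (by rw [Walk.support_cons]; exact List.mem_cons_of_mem _ hy')
            refine ⟨Walk.cons ha1 (Walk.cons ha2 (p''.transfer _ hsub)), ?_⟩
            simp [Walk.length_transfer]
    · -- the first edge is not the deleted edge
      by_cases hav : ({a, v} : Set V) = ({x, y} : Set V)
      · -- the tail is exactly the deleted edge; handle directly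
        have hane : a ≠ v := by
          intro hav'; subst hav'
          have hx' : x ∈ ({a, a} : Set V) := hav ▸ (by simp : x ∈ ({x, y} : Set V))
          have hy' : y ∈ ({a, a} : Set V) := hav ▸ (by simp : y ∈ ({x, y} : Set V))
          simp only [Set.mem_insert_iff, Set.mem_singleton_iff, or_self] at hx' hy'
          exact hxy.ne (hx'.trans hy'.symm)
        have hamem : a ∈ ({x, y} : Set V) := hav.subset (by simp)
        have hvmem : v ∈ ({x, y} : Set V) := hav.subset (by simp)
        simp only [Set.mem_insert_iff, Set.mem_singleton_iff] at hamem hvmem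
        have hcases : (a = x ∧ v = y) ∨ (a = y ∧ v = x) := by
          have hymem : y ∈ ({a, v} : Set V) := hav.symm.subset (by simp)
          have hxmem : x ∈ ({a, v} : Set V) := hav.symm.subset (by simp)
          simp only [Set.mem_insert_iff, Set.mem_singleton_iff] at hymem hxmem
          rcases hamem with h1 | h1 <;> rcases hvmem with h2 | h2
          · exact absurd (h1.trans h2.symm) hane
          · exact Or.inl ⟨h1, h2⟩
          · exact Or.inr ⟨h1, h2⟩
          · exact absurd (h1.trans h2.symm) hane
        rcases hcases with ⟨hax, hvy⟩ | ⟨hay, hvx⟩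
        · obtain rfl : x = a := hax.symm
          obtain rfl : y = v := hvy.symm
          -- p = u - x - y, a shortest path, so dist u y = 2
          have hp'1 : p'.length = 1 := by
            rw [hp'len, SimpleGraph.dist_eq_one_iff_adj]; exact hxy
          have hd2 : G.dist u y = 2 := by omega
          have hnuy : ¬ G.Adj u y := by
            intro hadj
            rw [← SimpleGraph.dist_eq_one_iff_adj] at hadj
            omega
          have huy : u ≠ y := by
            intro h'; subst h'
            have : G.dist u u = 0 := by simp
            omega
          by_cases huniq : ∀ z, G.Adj u z → G.Adj z y → z = x
          · exact absurd ⟨u, Or.inl ⟨h, hxy, hnuy, huy, huniq⟩⟩ H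
          · push_neg at huniq
            obtain ⟨z, hz1, hz2, hz3⟩ := huniq
            have ha1 : (G.deleteEdges {s(x, y)}).Adj u z := by
              rw [SimpleGraph.deleteEdges_adj]
              refine ⟨hz1, ?_⟩
              simp only [Set.mem_singleton_iff, Sym2.eq_iff]
              rintro (⟨h', -⟩ | ⟨h', -⟩)
              · exact h.ne h'
              · exact huy h'
            have ha2 : (G.deleteEdges {s(x, y)}).Adj z y := by
              rw [SimpleGraph.deleteEdges_adj]
              refine ⟨hz2, ?_⟩
              simp only [Set.mem_singleton_iff, Sym2.eq_iff]
              rintro (⟨h', -⟩ | ⟨-, h'⟩)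
              · exact hz3 h'
              · exact hxy.ne h'.symm
            exact ⟨Walk.cons ha1 (Walk.cons ha2 Walk.nil), by simp; omega⟩
        · obtain rfl : y = a := hay.symm
          obtain rfl : x = v := hvx.symm
          have hp'1 : p'.length = 1 := by
            rw [hp'len, SimpleGraph.dist_eq_one_iff_adj]; exact hxy.symm
          have hd2 : G.dist u x = 2 := by omega
          have hnux : ¬ G.Adj u x := by
            intro hadj
            rw [← SimpleGraph.dist_eq_one_iff_adj] at hadj
            omega
          have hux : u ≠ x := by
            intro h'; subst h'
            have : G.dist u u = 0 := by simp
            omega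
          by_cases huniq : ∀ z, G.Adj u z → G.Adj z x → z = y
          · refine absurd ⟨u, Or.inr ?_⟩ H
            exact IsConvexP3.symm ⟨h, hxy.symm, hnux, hux, huniq⟩
          · push_neg at huniq
            obtain ⟨z, hz1, hz2, hz3⟩ := huniq
            have ha1 : (G.deleteEdges {s(x, y)}).Adj u z := by
              rw [SimpleGraph.deleteEdges_adj]
              refine ⟨hz1, ?_⟩
              simp only [Set.mem_singleton_iff, Sym2.eq_iff]
              rintro (⟨h', -⟩ | ⟨h', -⟩)
              · exact hux h'
              · exact h.ne h'
            have ha2 : (G.deleteEdges {s(x, y)}).Adj z x := by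
              rw [SimpleGraph.deleteEdges_adj]
              refine ⟨hz2, ?_⟩
              simp only [Set.mem_singleton_iff, Sym2.eq_iff]
              rintro (⟨-, h'⟩ | ⟨h', -⟩)
              · exact hxy.ne h'
              · exact hz3 h'
            exact ⟨Walk.cons ha1 (Walk.cons ha2 Walk.nil), by simp; omega⟩
      · -- recurse on the tail
        obtain ⟨q', hq'⟩ := ih hpath' hp'len hav
        have ha1 : (G.deleteEdges {s(x, y)}).Adj u a := by
          rw [SimpleGraph.deleteEdges_adj]
          exact ⟨h, by simpa using he⟩
        exact ⟨Walk.cons ha1 q', by simp [hq']⟩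

/-- A connected graph is edge-critical iff every edge lies on a convex `P₃`. -/
theorem stmt_0 (G : SimpleGraph V) (hG : G.Connected) :
    EdgeCritical G ↔ ∀ x y : V, G.Adj x y → ∃ w : V, IsConvexP3 G w x y ∨ IsConvexP3 G x y w := by
  constructor
  · intro hEC x y hadj
    by_contra H
    obtain ⟨u, v, hset, hlt⟩ := hEC x y hadj
    have hr : G.Reachable u v := hG u v
    obtain ⟨p, hp_path, hp_len⟩ := hr.exists_path_of_dist
    obtain ⟨q, hq⟩ := exists_walk_avoiding hG hadj H p hp_path hp_len hset
    have h1 : (G.deleteEdges {s(x, y)}).edist u v ≤ p.length := by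
      rw [← hq]; exact SimpleGraph.edist_le q
    have h2 : (G.dist u v : ℕ∞) = G.edist u v := by
      rw [SimpleGraph.dist]
      exact ENat.coe_toNat (SimpleGraph.edist_ne_top_iff_reachable.mpr hr)
    rw [hp_len, h2] at h1
    exact absurd hlt (not_lt.mpr h1)
  · intro hP3 x y hadj
    obtain ⟨w, hw | hw⟩ := hP3 x y hadj
    · refine ⟨w, y, ?_, edist_lt_of_isConvexP3 hw (Or.inr rfl)⟩
      intro hset
      have : w ∈ ({x, y} : Set V) := hset.subset (by simp)
      simp only [Set.mem_insert_iff, Set.mem_singleton_iff] at this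
      rcases this with h' | h'
      · exact hw.1.ne h'
      · exact hw.2.2.2.1 h'
    · refine ⟨x, w, ?_, edist_lt_of_isConvexP3 hw (Or.inl rfl)⟩
      intro hset
      have : w ∈ ({x, y} : Set V) := hset.subset (by simp)
      simp only [Set.mem_insert_iff, Set.mem_singleton_iff] at this
      rcases this with h' | h'
      · exact hw.2.2.2.1 h'.symm
      · exact hw.2.1.ne h'.symm
end

section
/- If G is a connected simple graph of order at least 3 that contains no cycle of length 3 and no cycle of length 4 (i.e., its girth is at least 5), then G is edge-critical. -/
open SimpleGraph

universe u

variable {V : Type*}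

lemma noC3 {G : SimpleGraph V} (hg : 5 ≤ G.egirth) {a b c : V}
    (hab : G.Adj a b) (hbc : G.Adj b c) (hca : G.Adj c a) : False := by
  have hcycle : (Walk.cons hab (Walk.cons hbc (Walk.cons hca Walk.nil))).IsCycle := by
    rw [Walk.cons_isCycle_iff]
    constructor
    · simp [Walk.isPath_def, hbc.ne, hca.ne, hab.ne']
    · simp [Sym2.eq, Sym2.rel_iff', hab.ne, hbc.ne, hca.ne, hca.ne']
  have := le_egirth.mp hg _ _ hcycle
  norm_num at this

lemma noC4 {G : SimpleGraph V} (hg : 5 ≤ G.egirth) {a b c d : V}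
    (hab : G.Adj a b) (hbc : G.Adj b c) (hcd : G.Adj c d) (hda : G.Adj d a)
    (hac : a ≠ c) (hbd : b ≠ d) : False := by
  have hcycle : (Walk.cons hab (Walk.cons hbc (Walk.cons hcd (Walk.cons hda Walk.nil)))).IsCycle := by
    rw [Walk.cons_isCycle_iff]
    constructor
    · simp [Walk.isPath_def, hbc.ne, hcd.ne, hda.ne, hbd, hac.symm, hab.ne']
    · simp [Sym2.eq, Sym2.rel_iff', hab.ne, hbc.ne, hbd, hac, hda.ne', hab.ne']
  have := le_egirth.mp hg _ _ hcycle
  norm_num at this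

-- key lemma: z adjacent to y, z ≠ x gives criticality of edge xy
lemma key {G : SimpleGraph V} (hg : 5 ≤ G.egirth) {x y z : V}
    (hxy : G.Adj x y) (hzy : G.Adj z y) (hzx : z ≠ x) :
    IsDistCriticalEdge G x y := by
  refine ⟨z, x, ?_, ?_⟩
  · intro h
    have : z ∈ ({x, y} : Set V) := h ▸ (by simp : z ∈ ({z, x} : Set V))
    rcases this with h | h
    · exact hzx h
    · exact hzy.ne h
  · have hnzx : ¬ G.Adj z x := fun h => noC3 hg h hxy hzy.symm
    have h2 : G.edist z x = 2 := by
      have hle : G.edist z x ≤ 2 := by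
        have := edist_le (Walk.cons hzy (Walk.cons hxy.symm Walk.nil))
        simpa using this
      have h0 : G.edist z x ≠ 0 := edist_eq_zero_iff.ne.mpr hzx
      have h1 : G.edist z x ≠ 1 := fun h => hnzx (edist_eq_one_iff_adj.mp h)
      have : 1 < G.edist z x := lt_of_le_of_ne (Order.one_le_iff_pos.mpr
        (pos_iff_ne_zero.mpr h0)) (Ne.symm h1)
      have : (2 : ℕ∞) ≤ G.edist z x := Order.add_one_le_of_lt this
      exact le_antisymm hle this
    rw [h2]
    set G' := G.deleteEdges {s(x, y)} with hG'
    by_contra hcon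
    push_neg at hcon
    have hne : G'.edist z x ≠ ⊤ := fun h => by simp [h] at hcon
    obtain ⟨p, hp⟩ := exists_walk_of_edist_ne_top hne
    have hplen : (p.length : ℕ∞) ≤ 2 := hp ▸ hcon
    have hplen' : p.length ≤ 2 := by exact_mod_cast hplen
    -- case on the walk
    cases p with
    | nil => exact hzx rfl
    | cons h q =>
      rename_i w
      cases q with
      | nil =>
        exact hnzx ((deleteEdges_adj.mp h).1)
      | cons h' q' =>
        cases q' with
        | nil =>
          -- z - w - x in G'
          have hzw : G.Adj z w := (deleteEdges_adj.mp h).1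
          have hwx : G.Adj w x := (deleteEdges_adj.mp h').1
          have hwy : w ≠ y := by
            rintro rfl
            exact (deleteEdges_adj.mp h').2 (by rw [Sym2.eq_swap]; simp)
          -- 4-cycle x y z w
          exact noC4 hg hxy hzy.symm hzw hwx hzx.symm hwy.symm
        | cons h'' q'' =>
          simp [Walk.length_cons] at hplen'

lemma critSymm {G : SimpleGraph V} {x y : V} (h : IsDistCriticalEdge G y x) :
    IsDistCriticalEdge G x y := by
  obtain ⟨u, v, h1, h2⟩ := h
  refine ⟨u, v, ?_, ?_⟩
  · rwa [Set.pair_comm x y]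
  · rwa [show s(x,y) = s(y,x) from Sym2.eq_swap] 


/-- A connected graph of order at least `3` and girth at least `5` is
edge-critical. -/
theorem stmt_1 (G : SimpleGraph V) [Fintype V] (hG : G.Connected) (hn : 3 ≤ Fintype.card V)
    (hgirth : 5 ≤ G.egirth) : EdgeCritical G := by
  classical
  intro x y hxy
  -- find w ∉ {x, y}
  obtain ⟨w, hwx, hwy⟩ : ∃ w : V, w ≠ x ∧ w ≠ y := by
    by_contra hcon
    push_neg at hcon
    have : (Finset.univ : Finset V) ⊆ {x, y} := by
      intro v _
      rcases ne_or_eq v x with h | h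
      · simp [hcon v h]
      · simp [h]
    have := Finset.card_le_card this
    simp at this
    have h2 : ({x, y} : Finset V).card ≤ 2 := Finset.card_insert_le _ _ |>.trans (by simp)
    omega
  obtain ⟨p0⟩ := hG x w
  have hpath : (p0.toPath : G.Walk x w).IsPath := p0.toPath.2
  generalize hr : (p0.toPath : G.Walk x w) = r at hpath
  clear hr
  cases r with
  | nil => exact absurd rfl hwx.symm
  | cons h r1 =>
    rename_i a
    by_cases hay : a = y
    · subst hay
      cases r1 with
      | nil => exact absurd rfl hwy.symm
      | cons h' r2 =>
        rename_i b
        have hbx : b ≠ x := by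
          have hnd := hpath.support_nodup
          rw [Walk.support_cons, Walk.support_cons] at hnd
          intro hb
          exact (List.nodup_cons.mp hnd).1
            (List.mem_cons_of_mem _ (hb ▸ r2.start_mem_support))
        exact key hgirth hxy h'.symm hbx
    · -- a adjacent to x, a ≠ y : edge yx critical via a
      exact critSymm (key hgirth hxy.symm h.symm (fun h2 => hay h2))
end

section
/- Let G be a connected simple graph of order at least 3. Then every outer mutual-visibility set of G is independent if and only if G is edge-critical. -/
open SimpleGraph

universe u

variable {V : Type*}

lemma myEdistCast {G : SimpleGraph V} {u v : V} (h : G.Reachable u v) :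
    G.edist u v = (G.dist u v : ℕ∞) :=
  (ENat.coe_toNat (SimpleGraph.edist_ne_top_iff_reachable.mpr h)).symm

lemma myWalkSplit {G : SimpleGraph V} {x y u v : V} (p : G.Walk u v)
    (h : s(x, y) ∈ p.edges) :
    (∃ (q : G.Walk u x) (r : G.Walk y v), q.length + 1 + r.length = p.length) ∨
    (∃ (q : G.Walk u y) (r : G.Walk x v), q.length + 1 + r.length = p.length) := by
  induction p with
  | nil => simp at h
  | @cons a b c hadj p ih =>
    rw [SimpleGraph.Walk.edges_cons, List.mem_cons] at h
    rcases h with h | h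
    · rw [Sym2.eq_iff] at h
      rcases h with ⟨hx, hy⟩ | ⟨hx, hy⟩
      · subst hx; subst hy
        exact Or.inl ⟨SimpleGraph.Walk.nil, p, by simp only [SimpleGraph.Walk.length_nil, SimpleGraph.Walk.length_cons]; omega⟩
      · subst hx; subst hy
        exact Or.inr ⟨SimpleGraph.Walk.nil, p, by simp only [SimpleGraph.Walk.length_nil, SimpleGraph.Walk.length_cons]; omega⟩
    · rcases ih h with ⟨q, r, hl⟩ | ⟨q, r, hl⟩
      · exact Or.inl ⟨SimpleGraph.Walk.cons hadj q, r, by simp only [SimpleGraph.Walk.length_cons]; omega⟩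
      · exact Or.inr ⟨SimpleGraph.Walk.cons hadj q, r, by simp only [SimpleGraph.Walk.length_cons]; omega⟩

lemma myTwoLe {G : SimpleGraph V} {x y : V} (hxy : x ≠ y)
    (q : (G.deleteEdges {s(x, y)}).Walk x y) : 2 ≤ q.length := by
  cases q with
  | nil => exact absurd rfl hxy
  | cons h r =>
    cases r with
    | nil => simp at h
    | cons h2 r2 => simp only [SimpleGraph.Walk.length_cons]; omega

lemma myVisSymm {G : SimpleGraph V} {X : Set V} {u v : V} (h : Visible G X u v) :
    Visible G X v u := by
  obtain ⟨p, hl, hs⟩ := h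
  refine ⟨p.reverse, by rw [SimpleGraph.Walk.length_reverse, hl, SimpleGraph.dist_comm], ?_⟩
  intro w hw hwX
  rw [SimpleGraph.Walk.support_reverse, List.mem_reverse] at hw
  exact (hs w hw hwX).symm

/-- Forward-direction key: if deleting edge `xy` preserves the `x z` edistance, then
`x` and `z` are `{x,y}`-visible. -/
lemma myVisAux {G : SimpleGraph V} (hG : G.Connected) {x y z : V} (hadj : G.Adj x y)
    (heq : (G.deleteEdges {s(x, y)}).edist x z = G.edist x z) :
    Visible G {x, y} x z := by
  classical
  have hr : (G.deleteEdges {s(x, y)}).Reachable x z := by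
    rw [← SimpleGraph.edist_ne_top_iff_reachable, heq,
      SimpleGraph.edist_ne_top_iff_reachable]
    exact hG x z
  obtain ⟨p', hp'⟩ := hr.exists_walk_length_eq_dist
  have hdist : (G.deleteEdges {s(x, y)}).dist x z = G.dist x z := congrArg ENat.toNat heq
  have hsub : ∀ e ∈ p'.edges, e ∈ G.edgeSet := by
    intro e he
    have := SimpleGraph.Walk.edges_subset_edgeSet p' he
    rw [SimpleGraph.edgeSet_deleteEdges] at this
    exact this.1
  refine ⟨p'.transfer G hsub, by rw [SimpleGraph.Walk.length_transfer, hp', hdist], ?_⟩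
  intro w hw hwX
  rw [SimpleGraph.Walk.support_transfer] at hw
  simp only [Set.mem_insert_iff, Set.mem_singleton_iff] at hwX
  rcases hwX with rfl | rfl
  · exact Or.inl rfl
  · by_cases hwz : w = z
    · exact Or.inr hwz
    exfalso
    have h2 : 2 ≤ (p'.takeUntil w hw).length := myTwoLe hadj.ne (p'.takeUntil w hw)
    have hsub2 : ∀ e ∈ (p'.dropUntil w hw).edges, e ∈ G.edgeSet :=
      fun e he => hsub e (SimpleGraph.Walk.edges_dropUntil_subset p' hw he)
    have h3 : G.dist w z ≤ (p'.dropUntil w hw).length := by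
      have := SimpleGraph.dist_le ((p'.dropUntil w hw).transfer G hsub2)
      rwa [SimpleGraph.Walk.length_transfer] at this
    have h4 : (p'.takeUntil w hw).length + (p'.dropUntil w hw).length = G.dist x z := by
      have := congrArg SimpleGraph.Walk.length (p'.take_spec hw)
      rw [SimpleGraph.Walk.length_append] at this
      rw [this, hp', hdist]
    have h5 : G.dist x z ≤ 1 + G.dist w z := by
      have htr := hG.dist_triangle (u := x) (v := w) (w := z)
      have h1 : G.dist x w = 1 := SimpleGraph.dist_eq_one_iff_adj.mpr hadj
      omega
    omega

lemma myPairNe {x y a b : V} (hax : y ≠ a) (hab : y ≠ b) :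
    ({a, b} : Set V) ≠ ({x, y} : Set V) := by
  intro h
  have : y ∈ ({a, b} : Set V) := by rw [h]; simp
  simp only [Set.mem_insert_iff, Set.mem_singleton_iff] at this
  rcases this with h' | h'
  · exact hax h'
  · exact hab h'

lemma myOuterPair {G : SimpleGraph V} (hG : G.Connected) {x y : V} (hadj : G.Adj x y)
    (hnc : ¬ IsDistCriticalEdge G x y) : IsOuterMVSet G {x, y} := by
  have heq : ∀ u v : V, ({u, v} : Set V) ≠ ({x, y} : Set V) →
      (G.deleteEdges {s(x, y)}).edist u v = G.edist u v := by
    intro u v h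
    exact le_antisymm (not_lt.mp fun hlt => hnc ⟨u, v, h, hlt⟩)
      (SimpleGraph.edist_anti (G.deleteEdges_le _))
  have hvisrefl : ∀ a : V, Visible G {x, y} a a := by
    intro a
    refine ⟨SimpleGraph.Walk.nil, by simp [SimpleGraph.dist_self], ?_⟩
    intro w hw _
    simp only [SimpleGraph.Walk.support_nil, List.mem_singleton] at hw
    exact Or.inl hw
  have hvispair : Visible G {x, y} x y := by
    refine ⟨hadj.toWalk, ?_, ?_⟩
    · simp [SimpleGraph.Adj.toWalk, SimpleGraph.dist_eq_one_iff_adj.mpr hadj]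
    · intro w hw _
      simp only [SimpleGraph.Adj.toWalk, SimpleGraph.Walk.support_cons,
        SimpleGraph.Walk.support_nil, List.mem_cons, List.mem_singleton] at hw
      rcases hw with h | h
      · exact Or.inl h
      · exact Or.inr (by simpa using h)
  constructor
  · intro a ha b hb
    simp only [Set.mem_insert_iff, Set.mem_singleton_iff] at ha hb
    rcases ha with rfl | rfl <;> rcases hb with rfl | rfl
    · exact hvisrefl _
    · exact hvispair
    · exact myVisSymm hvispair
    · exact hvisrefl _
  · intro a ha z hz
    simp only [Set.mem_insert_iff, Set.mem_singleton_iff] at ha hz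
    push_neg at hz
    obtain ⟨hzx, hzy⟩ := hz
    rcases ha with rfl | rfl
    · exact myVisAux hG hadj (heq a z (myPairNe hadj.ne' (fun h => hzy h.symm)))
    · have h' : ({a, z} : Set V) ≠ ({x, a} : Set V) := by
        intro h
        have : x ∈ ({a, z} : Set V) := by rw [h]; simp
        simp only [Set.mem_insert_iff, Set.mem_singleton_iff] at this
        rcases this with h' | h'
        · exact hadj.ne h'
        · exact hzx h'.symm
      have heq' : (G.deleteEdges {s(a, x)}).edist a z = G.edist a z := by
        rw [show s(a, x) = s(x, a) from Sym2.eq_swap]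
        exact heq a z h'
      have := myVisAux (y := x) hG hadj.symm heq'
      rwa [Set.pair_comm a x] at this

lemma myVisOf {G : SimpleGraph V} {X : Set V} (hX : IsOuterMVSet G X) {a : V} (ha : a ∈ X)
    (b : V) : Visible G X a b := by
  by_cases hb : b ∈ X
  · exact hX.1 a ha b hb
  · exact hX.2 a ha b hb

lemma myAvoid {G : SimpleGraph V} {x y u v : V}
    (hviol : G.edist u v < (G.deleteEdges {s(x, y)}).edist u v)
    {p : G.Walk u v} (hp : p.length = G.dist u v) : s(x, y) ∈ p.edges := by
  by_contra hne
  have hsub : ∀ e ∈ p.edges, e ∈ (G.deleteEdges {s(x, y)}).edgeSet := by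
    intro e he
    rw [SimpleGraph.edgeSet_deleteEdges]
    refine ⟨SimpleGraph.Walk.edges_subset_edgeSet p he, ?_⟩
    simp only [Set.mem_singleton_iff]
    rintro rfl
    exact hne he
  have h1 := SimpleGraph.Walk.edist_le (p.transfer _ hsub)
  rw [SimpleGraph.Walk.length_transfer] at h1
  have h3 : G.edist u v = (p.length : ℕ∞) := by
    rw [myEdistCast p.reachable, hp]
  exact absurd hviol (not_lt.mpr (h3 ▸ h1))

lemma myHalf {G : SimpleGraph V} (hG : G.Connected) {X : Set V} (hX : IsOuterMVSet G X)
    {x y : V} (hx : x ∈ X) (hy : y ∈ X) (hadj : G.Adj x y) {d : ℕ}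
    (hmin : ∀ u' v' : V, ({u', v'} : Set V) ≠ ({x, y} : Set V) → G.dist u' v' < d →
      ¬ G.edist u' v' < (G.deleteEdges {s(x, y)}).edist u' v')
    {u v : V} (hne : ({u, v} : Set V) ≠ ({x, y} : Set V))
    (hviol : G.edist u v < (G.deleteEdges {s(x, y)}).edist u v)
    (hd : G.dist u v = d)
    (q : G.Walk u x) (r : G.Walk y v) (hlen : q.length + 1 + r.length = d) : False := by
  have hq := SimpleGraph.dist_le q
  have hr := SimpleGraph.dist_le r
  have hxy1 : G.dist x y = 1 := SimpleGraph.dist_eq_one_iff_adj.mpr hadj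
  have htri1 : G.dist u v ≤ G.dist u x + G.dist x v := hG.dist_triangle
  have htri2 : G.dist x v ≤ G.dist x y + G.dist y v := hG.dist_triangle
  have heq : G.dist u x + 1 + G.dist y v = d := by omega
  by_cases hux : u = x
  · subst hux
    have hvy : v ≠ y := fun h => hne (by rw [h])
    obtain ⟨p, hp1, hp2⟩ := myVisOf hX hx v
    have hedge := myAvoid hviol hp1
    have hy' := SimpleGraph.Walk.snd_mem_support_of_mem_edges p hedge
    rcases hp2 y hy' hy with h | h
    · exact hadj.ne' h
    · exact hvy h.symm
  · by_cases hvy : v = y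
    · subst hvy
      obtain ⟨p, hp1, hp2⟩ := myVisSymm (myVisOf hX hy u)
      have hedge := myAvoid hviol hp1
      have hx' := SimpleGraph.Walk.fst_mem_support_of_mem_edges p hedge
      rcases hp2 x hx' hx with h | h
      · exact hux h.symm
      · exact hadj.ne h
    · have ha1 : 0 < G.dist u x := hG.pos_dist_of_ne hux
      have hxv : G.dist x v = 1 + G.dist y v := by omega
      have hnexy : ({x, v} : Set V) ≠ ({x, y} : Set V) :=
        myPairNe hadj.ne' (fun h => hvy h.symm)
      have hnv := hmin x v hnexy (by omega)
      have hle : (G.deleteEdges {s(x, y)}).edist x v ≤ ((1 + G.dist y v : ℕ) : ℕ∞) := by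
        have h' := not_lt.mp hnv
        rwa [myEdistCast (hG x v), hxv] at h'
      have hrQ : (G.deleteEdges {s(x, y)}).Reachable x v :=
        SimpleGraph.edist_ne_top_iff_reachable.mp
          (ne_top_of_le_ne_top (ENat.coe_ne_top _) hle)
      obtain ⟨Q, hQ⟩ := hrQ.exists_walk_length_eq_edist
      have hQle : Q.length ≤ 1 + G.dist y v := by
        rw [← hQ] at hle
        exact_mod_cast hle
      obtain ⟨R, hR⟩ := (hG u x).exists_walk_length_eq_dist
      have hRe : s(x, y) ∉ R.edges := by
        intro hmem
        rcases myWalkSplit R hmem with ⟨q1, r1, hl1⟩ | ⟨q1, r1, hl1⟩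
        · have := SimpleGraph.dist_le q1
          rw [hR] at hl1
          omega
        · have h1 := SimpleGraph.dist_le q1
          have h2 : G.dist u v ≤ G.dist u y + G.dist y v := hG.dist_triangle
          rw [hR] at hl1
          omega
      have hsub : ∀ e ∈ R.edges, e ∈ (G.deleteEdges {s(x, y)}).edgeSet := by
        intro e he
        rw [SimpleGraph.edgeSet_deleteEdges]
        refine ⟨SimpleGraph.Walk.edges_subset_edgeSet R he, ?_⟩
        simp only [Set.mem_singleton_iff]
        rintro rfl
        exact hRe he
      have hfin := SimpleGraph.Walk.edist_le ((R.transfer _ hsub).append Q)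
      rw [SimpleGraph.Walk.length_append, SimpleGraph.Walk.length_transfer] at hfin
      have hlen2 : R.length + Q.length ≤ d := by omega
      have hfin2 : (G.deleteEdges {s(x, y)}).edist u v ≤ (d : ℕ∞) :=
        le_trans hfin (by exact_mod_cast hlen2)
      rw [myEdistCast (hG u v), hd] at hviol
      exact absurd (lt_of_lt_of_le hviol hfin2) (lt_irrefl _)

lemma myIndep {G : SimpleGraph V} (hG : G.Connected) (hEC : EdgeCritical G) :
    ∀ X : Set V, IsOuterMVSet G X → IsIndependentSet G X := by
  classical
  intro X hX x hx y hy hadj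
  have hEx : ∃ n : ℕ, ∃ u v : V, ({u, v} : Set V) ≠ ({x, y} : Set V) ∧
      G.edist u v < (G.deleteEdges {s(x, y)}).edist u v ∧ G.dist u v = n := by
    obtain ⟨u, v, h1, h2⟩ := hEC x y hadj
    exact ⟨G.dist u v, u, v, h1, h2, rfl⟩
  obtain ⟨u, v, hne, hviol, hd⟩ := Nat.find_spec hEx
  have hmin : ∀ u' v' : V, ({u', v'} : Set V) ≠ ({x, y} : Set V) →
      G.dist u' v' < Nat.find hEx →
      ¬ G.edist u' v' < (G.deleteEdges {s(x, y)}).edist u' v' := by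
    intro u' v' h1 h2 h3
    exact Nat.find_min hEx h2 ⟨u', v', h1, h3, rfl⟩
  obtain ⟨p, hp⟩ := (hG u v).exists_walk_length_eq_dist
  have hedge := myAvoid hviol hp
  rcases myWalkSplit p hedge with ⟨q, r, hl⟩ | ⟨q, r, hl⟩
  · exact myHalf hG hX hx hy hadj hmin hne hviol hd q r (by rw [hp, hd] at hl; exact hl)
  · refine myHalf (x := y) (y := x) (d := Nat.find hEx) hG hX hy hx hadj.symm ?_ ?_ ?_ hd q r
      (by rw [hp, hd] at hl; exact hl)
    · intro u' v' h1 h2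
      rw [show s(y, x) = s(x, y) from Sym2.eq_swap]
      rw [Set.pair_comm y x] at h1
      exact hmin u' v' h1 h2
    · rw [Set.pair_comm y x]
      exact hne
    · rw [show s(y, x) = s(x, y) from Sym2.eq_swap]
      exact hviol

/-- In a connected graph of order at least `3`, every outer MV set is
independent iff the graph is edge-critical. -/
theorem stmt_2 (G : SimpleGraph V) [Fintype V] (hG : G.Connected) (hn : 3 ≤ Fintype.card V) :
    (∀ X : Set V, IsOuterMVSet G X → IsIndependentSet G X) ↔ EdgeCritical G := by
  constructor
  · intro hind x y hadj
    by_contra hnc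
    exact hind {x, y} (myOuterPair hG hadj hnc) x (by simp) y (by simp) hadj
  · intro hEC X hX
    exact myIndep hG hEC X hX
end

section
/- If G is a simple graph with diameter exactly 2, then every independent set of G is an outer mutual-visibility set. -/
open SimpleGraph

universe u

variable {V : Type*}

lemma vis_aux (G : SimpleGraph V) (hdiam : G.ediam = 2) (X : Set V)
    (hX : IsIndependentSet G X) (u v : V) (hu : u ∈ X) : Visible G X u v := by
  by_cases huv : u = v
  · subst huv
    refine ⟨Walk.nil, ?_, ?_⟩
    · simp [SimpleGraph.dist_self]
    · intro w hw _; simp at hw; exact Or.inl hw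
  by_cases hadj : G.Adj u v
  · refine ⟨hadj.toWalk, ?_, ?_⟩
    · simp [SimpleGraph.dist_eq_one_iff_adj.mpr hadj]
    · intro w hw _
      simp [Walk.support_cons] at hw
      tauto
  · have hle : G.edist u v ≤ 2 := hdiam ▸ SimpleGraph.edist_le_ediam
    have hnt : G.edist u v ≠ ⊤ := fun h => by simp [h] at hle
    obtain ⟨k, hk⟩ := WithTop.ne_top_iff_exists.mp hnt
    have hk2 : k ≤ 2 := by rw [← hk, show (2:ℕ∞) = ((2:ℕ):ℕ∞) from rfl] at hle; exact Nat.cast_le.mp hle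
    have hk0 : k ≠ 0 := by
      intro h; subst h
      exact huv (SimpleGraph.edist_eq_zero_iff.mp hk.symm)
    have hk1 : k ≠ 1 := by
      intro h; subst h
      exact hadj (SimpleGraph.edist_eq_one_iff_adj.mp hk.symm)
    have hke : k = 2 := by omega
    subst hke
    have he2 : G.edist u v = (2 : ℕ) := hk.symm
    obtain ⟨p, hp⟩ := SimpleGraph.exists_walk_of_edist_eq_coe he2
    have hdist : G.dist u v = 2 := by
      rw [SimpleGraph.dist, he2]; rfl
    cases p with
    | nil => simp at hp
    | @cons _ b _ h q =>
      cases q with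
      | nil => simp at hp
      | @cons _ z _ h' q' =>
        cases q' with
        | nil =>
          refine ⟨Walk.cons h (Walk.cons h' Walk.nil), ?_, ?_⟩
          · simp [hdist]
          · intro w hw hwX
            simp [Walk.support_cons] at hw
            rcases hw with rfl | rfl | rfl
            · exact Or.inl rfl
            · exact absurd h (hX u hu w hwX)
            · exact Or.inr rfl
        | cons _ _ => simp [Walk.length_cons] at hp

/-- In a graph of diameter exactly `2`, every independent set is an outer MV set. -/
theorem stmt_3 (G : SimpleGraph V) (hdiam : G.ediam = 2) :
    ∀ X : Set V, IsIndependentSet G X → IsOuterMVSet G X := by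
  intro X hX
  exact ⟨fun u hu v _ => vis_aux G hdiam X hX u v hu,
         fun x hx y _ => vis_aux G hdiam X hX x y hx⟩
end

section
/- If G is a simple graph with diameter exactly 2 that is edge-critical, then a set X ⊆ V(G) is an outer mutual-visibility set if and only if X is independent; consequently the outer mutual-visibility number of G equals the independence number of G. -/
open SimpleGraph

universe u

variable {V : Type*}

lemma forced_middle_helper (G : SimpleGraph V) (X : Set V) (hX : IsOuterMVSet G X)
    {u v b : V} (hu : u ∈ X) (hv : v ∈ X) (hab : G.dist u b = 2)
    (hmid : ∀ m, G.Adj u m → G.Adj m b → m = v) : False := by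
  have hvis : Visible G X u b := by
    by_cases hbX : b ∈ X
    · exact hX.1 u hu b hbX
    · exact hX.2 u hu b hbX
  obtain ⟨p, hp, hsup⟩ := hvis
  rw [hab] at hp
  have h01 : G.Adj (p.getVert 0) (p.getVert 1) := p.adj_getVert_succ (by omega)
  have h12 : G.Adj (p.getVert 1) (p.getVert 2) := p.adj_getVert_succ (by omega)
  rw [p.getVert_zero] at h01
  have h2 : p.getVert 2 = b := by
    have := p.getVert_length
    rwa [hp] at this
  rw [h2] at h12
  have hmv : p.getVert 1 = v := hmid _ h01 h12
  have hmem : p.getVert 1 ∈ p.support :=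
    Walk.mem_support_iff_exists_getVert.mpr ⟨1, rfl, by omega⟩
  rcases hsup _ hmem (hmv ▸ hv) with h | h
  · exact h01.ne h.symm
  · exact h12.ne h

lemma sym2_pair_set_eq {a b u v : V} (h : s(a, b) = s(u, v)) :
    ({a, b} : Set V) = ({u, v} : Set V) := by
  rcases Sym2.eq_iff.mp h with ⟨rfl, rfl⟩ | ⟨rfl, rfl⟩
  · rfl
  · exact Set.pair_comm _ _

lemma mid_unique (G : SimpleGraph V) {u v a b : V} (huv : G.Adj u v) (hab : a ≠ b)
    (hforce : ∀ m, G.Adj a m → G.Adj m b → s(a, m) = s(u, v) ∨ s(m, b) = s(u, v))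
    (ha : a = u) (hbv : b ≠ v) :
    ∀ m, G.Adj u m → G.Adj m b → m = v := by
  subst ha
  intro m h1 h2
  rcases hforce m h1 h2 with h | h
  · rcases Sym2.eq_iff.mp h with ⟨_, hm⟩ | ⟨huv', _⟩
    · exact hm
    · exact absurd huv' huv.ne
  · rcases Sym2.eq_iff.mp h with ⟨_, hb⟩ | ⟨hm, hb⟩
    · exact absurd hb hbv
    · exact absurd hb.symm hab

/-- In an edge-critical graph of diameter exactly `2`, the outer MV sets are
exactly the independent sets; consequently the outer mutual-visibility number equals the
independence number. -/
theorem stmt_4 (G : SimpleGraph V) [Fintype V] (hdiam : G.ediam = 2) (hec : EdgeCritical G) :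
    (∀ X : Set V, IsOuterMVSet G X ↔ IsIndependentSet G X) ∧
    sSup {n : ℕ | ∃ X : Set V, IsOuterMVSet G X ∧ X.ncard = n} =
      sSup {n : ℕ | ∃ X : Set V, IsIndependentSet G X ∧ X.ncard = n} := by
  have hle : ∀ u v : V, G.edist u v ≤ 2 := fun u v => hdiam ▸ edist_le_ediam
  have h2top : (2 : ℕ∞) ≠ ⊤ := by decide
  have hntop : ∀ u v : V, G.edist u v ≠ ⊤ := fun u v h =>
    h2top (top_le_iff.mp (h ▸ hle u v))
  have hreach : ∀ u v : V, G.Reachable u v := fun u v =>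
    reachable_of_edist_ne_top (hntop u v)
  have hdist2 : ∀ u v : V, G.dist u v ≤ 2 := by
    intro u v
    have := ENat.toNat_le_toNat (hle u v) h2top
    simpa [SimpleGraph.dist] using this
  have hiff : ∀ X : Set V, IsOuterMVSet G X ↔ IsIndependentSet G X := by
    intro X
    constructor
    · -- outer MV → independent
      intro hX u hu v hv hadj
      obtain ⟨a, b, hne, hlt⟩ := hec u v hadj
      have hab_ne : a ≠ b := by
        rintro rfl
        simp [SimpleGraph.edist_self] at hlt
      have hab_nadj : ¬ G.Adj a b := by
        intro h
        have hsym : s(a, b) ≠ s(u, v) := fun hs => hne (sym2_pair_set_eq hs)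
        have h' : (G.deleteEdges {s(u, v)}).Adj a b := by
          rw [deleteEdges_adj]
          exact ⟨h, by simpa using hsym⟩
        rw [edist_eq_one_iff_adj.mpr h, edist_eq_one_iff_adj.mpr h'] at hlt
        exact lt_irrefl _ hlt
      have hdab : G.dist a b = 2 := by
        have h0 : G.dist a b ≠ 0 :=
          dist_ne_zero_iff_ne_and_reachable.mpr ⟨hab_ne, hreach a b⟩
        have h1 : G.dist a b ≠ 1 := fun h => hab_nadj (dist_eq_one_iff_adj.mp h)
        have := hdist2 a b
        omega
      have heab : G.edist a b = 2 := by
        have h := ENat.coe_toNat (hntop a b)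
        rw [← h, show (G.edist a b).toNat = G.dist a b from rfl, hdab]
        rfl
      have hforce : ∀ m, G.Adj a m → G.Adj m b →
          s(a, m) = s(u, v) ∨ s(m, b) = s(u, v) := by
        intro m h1 h2
        by_contra hcon
        push_neg at hcon
        have h1' : (G.deleteEdges {s(u, v)}).Adj a m := by
          rw [deleteEdges_adj]; exact ⟨h1, by simpa using hcon.1⟩
        have h2' : (G.deleteEdges {s(u, v)}).Adj m b := by
          rw [deleteEdges_adj]; exact ⟨h2, by simpa using hcon.2⟩
        have hw : (G.deleteEdges {s(u, v)}).edist a b ≤ 2 := by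
          have := Walk.edist_le (Walk.cons h1' (Walk.cons h2' Walk.nil))
          simpa using this
        rw [heab] at hlt
        exact absurd (hlt.trans_le hw) (lt_irrefl _)
      have hforce_rev : ∀ m, G.Adj b m → G.Adj m a →
          s(b, m) = s(u, v) ∨ s(m, a) = s(u, v) := by
        intro m h1 h2
        rcases hforce m h2.symm h1.symm with h | h
        · exact Or.inr (Sym2.eq_swap.trans h)
        · exact Or.inl (Sym2.eq_swap.trans h)
      have hforce' : ∀ m, G.Adj a m → G.Adj m b →
          s(a, m) = s(v, u) ∨ s(m, b) = s(v, u) := fun m h1 h2 =>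
        (hforce m h1 h2).imp (·.trans Sym2.eq_swap) (·.trans Sym2.eq_swap)
      have hforce_rev' : ∀ m, G.Adj b m → G.Adj m a →
          s(b, m) = s(v, u) ∨ s(m, a) = s(v, u) := fun m h1 h2 =>
        (hforce_rev m h1 h2).imp (·.trans Sym2.eq_swap) (·.trans Sym2.eq_swap)
      -- get one common neighbor m₀ of a and b
      obtain ⟨p, hp⟩ := (hreach a b).exists_walk_length_eq_dist
      rw [hdab] at hp
      have h01 : G.Adj (p.getVert 0) (p.getVert 1) := p.adj_getVert_succ (by omega)
      have h12 : G.Adj (p.getVert 1) (p.getVert 2) := p.adj_getVert_succ (by omega)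
      rw [p.getVert_zero] at h01
      have h2 : p.getVert 2 = b := by
        have := p.getVert_length
        rwa [hp] at this
      rw [h2] at h12
      obtain ⟨m₀, h01, h12⟩ : ∃ m, G.Adj a m ∧ G.Adj m b := ⟨p.getVert 1, h01, h12⟩
      rcases hforce m₀ h01 h12 with hs | hs
      · rcases Sym2.eq_iff.mp hs with ⟨ha, _⟩ | ⟨ha, _⟩
        · -- a = u
          have hbv : b ≠ v := fun h => hne (by rw [ha, h])
          exact forced_middle_helper G X hX hu hv (ha ▸ hdab)
            (mid_unique G hadj hab_ne hforce ha hbv)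
        · -- a = v
          have hbu : b ≠ u := fun h => hne (by rw [ha, h]; exact Set.pair_comm _ _)
          exact forced_middle_helper G X hX hv hu (ha ▸ hdab)
            (mid_unique G hadj.symm hab_ne hforce' ha hbu)
      · rcases Sym2.eq_iff.mp hs with ⟨_, hb⟩ | ⟨_, hb⟩
        · -- b = v
          have hau : a ≠ u := fun h => hne (by rw [h, hb])
          have hdba : G.dist b a = 2 := by rwa [SimpleGraph.dist_comm]
          exact forced_middle_helper G X hX hv hu (hb ▸ hdba)
            (mid_unique G hadj.symm hab_ne.symm hforce_rev' hb hau)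
        · -- b = u
          have hav : a ≠ v := fun h => hne (by rw [h, hb]; exact Set.pair_comm _ _)
          have hdba : G.dist b a = 2 := by rwa [SimpleGraph.dist_comm]
          exact forced_middle_helper G X hX hu hv (hb ▸ hdba)
            (mid_unique G hadj hab_ne.symm hforce_rev hb hav)
    · -- independent → outer MV
      intro hind
      have key : ∀ u ∈ X, ∀ v : V, Visible G X u v := by
        intro u hu v
        obtain ⟨p, hp⟩ := (hreach u v).exists_walk_length_eq_dist
        refine ⟨p, hp, ?_⟩
        intro w hw hwX
        obtain ⟨i, hgi, hile⟩ := Walk.mem_support_iff_exists_getVert.mp hw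
        have hlen : p.length ≤ 2 := by rw [hp]; exact hdist2 u v
        by_cases hi0 : i = 0
        · left; rw [← hgi, hi0, p.getVert_zero]
        · by_cases hil : i = p.length
          · right; rw [← hgi, hil, p.getVert_length]
          · exfalso
            have hi1 : i = 1 ∧ p.length = 2 := by omega
            have hadj : G.Adj (p.getVert 0) (p.getVert 1) :=
              p.adj_getVert_succ (by omega)
            rw [p.getVert_zero] at hadj
            rw [hi1.1] at hgi
            rw [hgi] at hadj
            exact hind u hu w hwX hadj
      constructor
      · intro u hu v _; exact key u hu v
      · intro u hu v _; exact key u hu v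
  refine ⟨hiff, ?_⟩
  congr 1
  ext n
  simp only [Set.mem_setOf_eq, hiff]
end

section
/- Let G and H be connected simple graphs, each with at least one vertex. Then the Cartesian product G □ H is edge-critical if and only if both G and H are edge-critical. -/
open SimpleGraph

universe u

variable {V : Type*}

section BoxProdCritical

variable {α' β' : Type*} {G' : SimpleGraph α'} {H' : SimpleGraph β'}

private lemma sym2_pair_left {a a' g g' : α'} {h : β'} :
    s(((a,h) : α' × β'), ((a',h) : α' × β')) = s(((g,h):α'×β'),((g',h):α'×β')) ↔
      s(a,a') = s(g,g') := by
  constructor <;> intro hh <;> rw [Sym2.eq_iff] at hh ⊢ <;>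
    rcases hh with ⟨h1,h2⟩|⟨h1,h2⟩ <;> simp_all [Prod.ext_iff]

private lemma exists_proj {x y : α' × β'} (w : (G'.boxProd H').Walk x y) :
    ∃ (p : G'.Walk x.1 y.1) (q : H'.Walk x.2 y.2), p.length + q.length = w.length := by
  induction w with
  | nil => exact ⟨.nil, .nil, rfl⟩
  | cons ha w' ih =>
    obtain ⟨p, q, hpq⟩ := ih
    rcases ha with ⟨hG, h2⟩ | ⟨hH, h1⟩
    · exact ⟨.cons hG p, q.copy h2.symm rfl, by simp only [Walk.length_cons, Walk.length_copy]; change _ = w'.length + 1; omega⟩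
    · exact ⟨p.copy h1.symm rfl, .cons hH q, by simp only [Walk.length_cons, Walk.length_copy]; change _ = w'.length + 1; omega⟩

private lemma boxProd_edist' (G' : SimpleGraph α') (H' : SimpleGraph β') (a c : α') (b d : β') :
    (G'.boxProd H').edist (a,b) (c,d) = G'.edist a c + H'.edist b d := by
  apply le_antisymm
  · by_cases hG : G'.edist a c = ⊤
    · simp [hG]
    by_cases hH : H'.edist b d = ⊤
    · simp [hH]
    obtain ⟨p, hp⟩ := exists_walk_of_edist_ne_top hG
    obtain ⟨q, hq⟩ := exists_walk_of_edist_ne_top hH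
    calc (G'.boxProd H').edist (a,b) (c,d)
        ≤ ((p.boxProdLeft H' b).append (q.boxProdRight G' c)).length := edist_le _
      _ = G'.edist a c + H'.edist b d := by
          simp [← hp, ← hq, show (p.boxProdLeft H' b).length = p.length from Walk.length_map ..,
            show (q.boxProdRight G' c).length = q.length from Walk.length_map ..]
  · rw [edist_eq_sInf]
    apply le_sInf
    rintro x ⟨w, rfl⟩
    obtain ⟨p, q, hpq⟩ := exists_proj w
    calc G'.edist a c + H'.edist b d ≤ (p.length : ℕ∞) + q.length :=
          add_le_add (edist_le _) (edist_le _)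
      _ = w.length := by rw [← hpq]; push_cast; ring

private lemma proj_del_left' {g g' : α'} {h : β'} {x y : α' × β'}
    (w : ((G'.boxProd H').deleteEdges {s(((g,h):α'×β'),((g',h):α'×β'))}).Walk x y) :
    ∃ q : H'.Walk x.2 y.2,
      (∃ p : G'.Walk x.1 y.1, p.length + q.length = w.length) ∧
      (x.2 = h → q.length = 0 →
        ∃ p : (G'.deleteEdges {s(g,g')}).Walk x.1 y.1, p.length = w.length) := by
  induction w with
  | nil => exact ⟨.nil, ⟨.nil, rfl⟩, fun _ _ => ⟨.nil, rfl⟩⟩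
  | @cons x z y ha w' ih =>
    rw [deleteEdges_adj] at ha
    obtain ⟨hadj, hmem⟩ := ha
    obtain ⟨q, ⟨p, hpq⟩, hcond⟩ := ih
    rcases hadj with ⟨hG, h2⟩ | ⟨hH, h1⟩
    · refine ⟨q.copy h2.symm rfl, ⟨.cons hG p, by simp [hpq]; omega⟩, ?_⟩
      intro hx2 hq0
      simp only [Walk.length_copy] at hq0
      obtain ⟨p0, hp0⟩ := hcond (h2 ▸ hx2) hq0
      refine ⟨.cons (deleteEdges_adj.mpr ⟨hG, ?_⟩) p0, by simp [hp0]⟩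
      simp only [Set.mem_singleton_iff]
      intro hcontra
      apply hmem
      simp only [Set.mem_singleton_iff]
      have hx : x = (x.1, h) := by rw [← hx2]
      have hz : z = (z.1, h) := by rw [← (h2.symm.trans hx2)]
      rw [hx, hz]
      exact sym2_pair_left.mpr hcontra
    · refine ⟨.cons hH q, ⟨p.copy h1.symm rfl, by simp [hpq]; omega⟩, ?_⟩
      intro _ hq0
      simp at hq0

private lemma proj_del_right' {h h' : β'} {g : α'} {x y : α' × β'}
    (w : ((G'.boxProd H').deleteEdges {s(((g,h):α'×β'),((g,h'):α'×β'))}).Walk x y) :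
    ∃ p : G'.Walk x.1 y.1,
      (∃ q : H'.Walk x.2 y.2, p.length + q.length = w.length) ∧
      (x.1 = g → p.length = 0 →
        ∃ q : (H'.deleteEdges {s(h,h')}).Walk x.2 y.2, q.length = w.length) := by
  induction w with
  | nil => exact ⟨.nil, ⟨.nil, rfl⟩, fun _ _ => ⟨.nil, rfl⟩⟩
  | @cons x z y ha w' ih =>
    rw [deleteEdges_adj] at ha
    obtain ⟨hadj, hmem⟩ := ha
    obtain ⟨p, ⟨q, hpq⟩, hcond⟩ := ih
    rcases hadj with ⟨hG, h2⟩ | ⟨hH, h1⟩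
    · refine ⟨.cons hG p, ⟨q.copy h2.symm rfl, by simp [hpq]; omega⟩, ?_⟩
      intro _ hp0
      simp at hp0
    · refine ⟨p.copy h1.symm rfl, ⟨.cons hH q, by simp [hpq]; omega⟩, ?_⟩
      intro hx1 hp0
      simp only [Walk.length_copy] at hp0
      obtain ⟨q0, hq0⟩ := hcond (h1 ▸ hx1) hp0
      refine ⟨.cons (deleteEdges_adj.mpr ⟨hH, ?_⟩) q0, by simp [hq0]⟩
      simp only [Set.mem_singleton_iff]
      intro hcontra
      apply hmem
      simp only [Set.mem_singleton_iff]
      have hx : x = (g, x.2) := by rw [← hx1]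
      have hz : z = (g, z.2) := by rw [← (h1.symm.trans hx1)]
      rw [hx, hz]
      rw [Sym2.eq_iff] at hcontra ⊢
      rcases hcontra with ⟨e1,e2⟩|⟨e1,e2⟩
      · exact Or.inl ⟨by rw [e1], by rw [e2]⟩
      · exact Or.inr ⟨by rw [e1], by rw [e2]⟩

private lemma del_boxProd_le_left' {g g' : α'} (hne : g ≠ g') (h : β') :
    (G'.deleteEdges {s(g,g')}).boxProd H' ≤
      (G'.boxProd H').deleteEdges {s(((g,h):α'×β'),((g',h):α'×β'))} := by
  intro x y hxy
  rw [deleteEdges_adj]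
  rcases hxy with ⟨hG, h2⟩ | ⟨hH, h1⟩
  · rw [deleteEdges_adj] at hG
    refine ⟨Or.inl ⟨hG.1, h2⟩, ?_⟩
    simp only [Set.mem_singleton_iff]
    intro hc
    apply hG.2
    simp only [Set.mem_singleton_iff]
    rw [Sym2.eq_iff] at hc
    rcases hc with ⟨e1, e2⟩ | ⟨e1, e2⟩
    · rw [Sym2.eq_iff]; exact Or.inl ⟨congrArg Prod.fst e1, congrArg Prod.fst e2⟩
    · rw [Sym2.eq_iff]; exact Or.inr ⟨congrArg Prod.fst e1, congrArg Prod.fst e2⟩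
  · refine ⟨Or.inr ⟨hH, h1⟩, ?_⟩
    simp only [Set.mem_singleton_iff]
    intro hc
    rw [Sym2.eq_iff] at hc
    apply hne
    rcases hc with ⟨e1, e2⟩ | ⟨e1, e2⟩
    · rw [show g = x.1 from (congrArg Prod.fst e1).symm,
        show g' = y.1 from (congrArg Prod.fst e2).symm, h1]
    · rw [show g = y.1 from (congrArg Prod.fst e2).symm,
        show g' = x.1 from (congrArg Prod.fst e1).symm, h1]

private lemma del_boxProd_le_right' {h h' : β'} (hne : h ≠ h') (g : α') :
    G'.boxProd (H'.deleteEdges {s(h,h')}) ≤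
      (G'.boxProd H').deleteEdges {s(((g,h):α'×β'),((g,h'):α'×β'))} := by
  intro x y hxy
  rw [deleteEdges_adj]
  rcases hxy with ⟨hG, h2⟩ | ⟨hH, h1⟩
  · refine ⟨Or.inl ⟨hG, h2⟩, ?_⟩
    simp only [Set.mem_singleton_iff]
    intro hc
    rw [Sym2.eq_iff] at hc
    apply hne
    rcases hc with ⟨e1, e2⟩ | ⟨e1, e2⟩
    · rw [show h = x.2 from (congrArg Prod.snd e1).symm,
        show h' = y.2 from (congrArg Prod.snd e2).symm, h2]
    · rw [show h = y.2 from (congrArg Prod.snd e2).symm,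
        show h' = x.2 from (congrArg Prod.snd e1).symm, h2]
  · rw [deleteEdges_adj] at hH
    refine ⟨Or.inr ⟨hH.1, h1⟩, ?_⟩
    simp only [Set.mem_singleton_iff]
    intro hc
    apply hH.2
    simp only [Set.mem_singleton_iff]
    rw [Sym2.eq_iff] at hc
    rcases hc with ⟨e1, e2⟩ | ⟨e1, e2⟩
    · rw [Sym2.eq_iff]; exact Or.inl ⟨congrArg Prod.snd e1, congrArg Prod.snd e2⟩
    · rw [Sym2.eq_iff]; exact Or.inr ⟨congrArg Prod.snd e1, congrArg Prod.snd e2⟩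

private lemma pair_set_of_pair_left' {u v g g' : α'} {h : β'}
    (hs : ({((u,h):α'×β'), (v,h)} : Set (α' × β')) = {(g,h), (g',h)}) :
    ({u, v} : Set α') = {g, g'} := by
  ext a
  have := Set.ext_iff.mp hs (a, h)
  simpa [Prod.ext_iff] using this

private lemma pair_set_of_pair_right' {u v h h' : β'} {g : α'}
    (hs : ({((g,u):α'×β'), (g,v)} : Set (α' × β')) = {(g,h), (g,h')}) :
    ({u, v} : Set β') = {h, h'} := by
  ext a
  have := Set.ext_iff.mp hs (g, a)
  simpa [Prod.ext_iff] using this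

private lemma pair_case_left (hH : H'.Connected) {u v : α'} {b1 b2 h : β'}
    (hAdj : G'.Adj u v) (hbne : ¬(b1 = h ∧ b2 = h)) :
    ((G'.boxProd H').deleteEdges {s(((u,h):α'×β'),((v,h):α'×β'))}).edist (u,b1) (v,b2) ≤
      (G'.boxProd H').edist (u,b1) (v,b2) := by
  have hedge : ∀ b : β', b ≠ h →
      ((G'.boxProd H').deleteEdges {s(((u,h):α'×β'),((v,h):α'×β'))}).Adj (u,b) (v,b) := by
    intro b hb
    rw [deleteEdges_adj]
    refine ⟨Or.inl ⟨hAdj, rfl⟩, ?_⟩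
    simp only [Set.mem_singleton_iff]
    intro hc
    rw [Sym2.eq_iff] at hc
    rcases hc with ⟨e1, _⟩ | ⟨e1, _⟩ <;> exact hb (congrArg Prod.snd e1)
  have hrhs : (G'.boxProd H').edist (u,b1) (v,b2) = 1 + H'.edist b1 b2 := by
    rw [boxProd_edist', edist_eq_one_iff_adj.mpr hAdj]
  rw [hrhs]
  by_cases hb : b1 = b2
  · subst hb
    have hb1 : b1 ≠ h := fun hc => hbne ⟨hc, hc⟩
    calc _ ≤ ((Walk.cons (hedge b1 hb1) Walk.nil).length : ℕ∞) := edist_le _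
      _ = 1 := by simp
      _ ≤ 1 + H'.edist b1 b1 := le_self_add
  · obtain ⟨q, hq⟩ := hH.exists_walk_length_eq_edist b1 b2
    by_cases hb1 : b1 = h
    · have hb2 : b2 ≠ h := fun hc => hbne ⟨hb1, hc⟩
      calc _ ≤ (((((Walk.boxProdRight (G'.deleteEdges {s(u,v)}) u q).mapLe
              (del_boxProd_le_left' hAdj.ne h)).append
              (Walk.cons (hedge b2 hb2) Walk.nil)).length) : ℕ∞) := edist_le _
        _ = (q.length : ℕ∞) + 1 := by
            simp [Walk.length_mapLe, show (Walk.boxProdRight (G'.deleteEdges {s(u,v)}) u q).length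
              = q.length from Walk.length_map ..]
        _ = 1 + H'.edist b1 b2 := by rw [hq, add_comm]
    · calc _ ≤ (((Walk.cons (hedge b1 hb1)
              ((Walk.boxProdRight (G'.deleteEdges {s(u,v)}) v q).mapLe
                (del_boxProd_le_left' hAdj.ne h))).length) : ℕ∞) := edist_le _
        _ = (q.length : ℕ∞) + 1 := by
            simp [Walk.length_mapLe, show (Walk.boxProdRight (G'.deleteEdges {s(u,v)}) v q).length
              = q.length from Walk.length_map ..]
        _ = 1 + H'.edist b1 b2 := by rw [hq, add_comm]

private lemma pair_case_right (hG : G'.Connected) {u v : β'} {a1 a2 g : α'}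
    (hAdj : H'.Adj u v) (hbne : ¬(a1 = g ∧ a2 = g)) :
    ((G'.boxProd H').deleteEdges {s(((g,u):α'×β'),((g,v):α'×β'))}).edist (a1,u) (a2,v) ≤
      (G'.boxProd H').edist (a1,u) (a2,v) := by
  have hedge : ∀ a : α', a ≠ g →
      ((G'.boxProd H').deleteEdges {s(((g,u):α'×β'),((g,v):α'×β'))}).Adj (a,u) (a,v) := by
    intro a haa
    rw [deleteEdges_adj]
    refine ⟨Or.inr ⟨hAdj, rfl⟩, ?_⟩
    simp only [Set.mem_singleton_iff]
    intro hc
    rw [Sym2.eq_iff] at hc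
    rcases hc with ⟨e1, _⟩ | ⟨e1, _⟩ <;> exact haa (congrArg Prod.fst e1)
  have hrhs : (G'.boxProd H').edist (a1,u) (a2,v) = G'.edist a1 a2 + 1 := by
    rw [boxProd_edist', edist_eq_one_iff_adj.mpr hAdj]
  rw [hrhs]
  by_cases ha : a1 = a2
  · subst ha
    have ha1 : a1 ≠ g := fun hc => hbne ⟨hc, hc⟩
    calc _ ≤ ((Walk.cons (hedge a1 ha1) Walk.nil).length : ℕ∞) := edist_le _
      _ = 1 := by simp
      _ ≤ G'.edist a1 a1 + 1 := le_add_self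
  · obtain ⟨p, hp⟩ := hG.exists_walk_length_eq_edist a1 a2
    by_cases ha1 : a1 = g
    · have ha2 : a2 ≠ g := fun hc => hbne ⟨ha1, hc⟩
      calc _ ≤ (((((Walk.boxProdLeft (H'.deleteEdges {s(u,v)}) u p).mapLe
              (del_boxProd_le_right' hAdj.ne g)).append
              (Walk.cons (hedge a2 ha2) Walk.nil)).length) : ℕ∞) := edist_le _
        _ = (p.length : ℕ∞) + 1 := by
            simp [Walk.length_mapLe, show (Walk.boxProdLeft (H'.deleteEdges {s(u,v)}) u p).length
              = p.length from Walk.length_map ..]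
        _ = G'.edist a1 a2 + 1 := by rw [hp]
    · calc _ ≤ (((Walk.cons (hedge a1 ha1)
              ((Walk.boxProdLeft (H'.deleteEdges {s(u,v)}) v p).mapLe
                (del_boxProd_le_right' hAdj.ne g))).length) : ℕ∞) := edist_le _
        _ = (p.length : ℕ∞) + 1 := by
            simp [Walk.length_mapLe, show (Walk.boxProdLeft (H'.deleteEdges {s(u,v)}) v p).length
              = p.length from Walk.length_map ..]
        _ = G'.edist a1 a2 + 1 := by rw [hp]

private lemma backward_left (hG : G'.Connected)
    (g g' : α') (b : β')
    (hcrit : IsDistCriticalEdge G' g g') :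
    IsDistCriticalEdge (G'.boxProd H') (g, b) (g', b) := by
  obtain ⟨u, v, hne, hlt⟩ := hcrit
  refine ⟨(u, b), (v, b), fun hs => hne (pair_set_of_pair_left' hs), ?_⟩
  have hfin : G'.edist u v ≠ ⊤ := edist_ne_top_iff_reachable.mpr (hG u v)
  have key : G'.edist u v + 1 ≤
      ((G'.boxProd H').deleteEdges {s(((g,b):α'×β'),((g',b):α'×β'))}).edist (u,b) (v,b) := by
    rw [edist_eq_sInf]
    apply le_sInf
    rintro z ⟨w, rfl⟩
    obtain ⟨q, ⟨p, hpq⟩, hcond⟩ := proj_del_left' w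
    by_cases hq0 : q.length = 0
    · obtain ⟨p0, hp0⟩ := hcond rfl hq0
      calc G'.edist u v + 1 ≤ (G'.deleteEdges {s(g,g')}).edist u v :=
            (ENat.add_one_le_iff hfin).mpr hlt
        _ ≤ p0.length := edist_le _
        _ = w.length := by exact_mod_cast hp0
    · calc G'.edist u v + 1 ≤ (p.length : ℕ∞) + q.length := by
            refine add_le_add (edist_le _) ?_
            exact_mod_cast Nat.one_le_iff_ne_zero.mpr hq0
        _ = w.length := by exact_mod_cast hpq
  calc (G'.boxProd H').edist (u, b) (v, b) = G'.edist u v := by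
        rw [boxProd_edist', edist_self, add_zero]
    _ < G'.edist u v + 1 := (ENat.lt_add_one_iff hfin).mpr le_rfl
    _ ≤ _ := key

private lemma backward_right (hH : H'.Connected)
    (h h' : β') (a : α')
    (hcrit : IsDistCriticalEdge H' h h') :
    IsDistCriticalEdge (G'.boxProd H') (a, h) (a, h') := by
  obtain ⟨u, v, hne, hlt⟩ := hcrit
  refine ⟨(a, u), (a, v), fun hs => hne (pair_set_of_pair_right' hs), ?_⟩
  have hfin : H'.edist u v ≠ ⊤ := edist_ne_top_iff_reachable.mpr (hH u v)
  have key : H'.edist u v + 1 ≤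
      ((G'.boxProd H').deleteEdges {s(((a,h):α'×β'),((a,h'):α'×β'))}).edist (a,u) (a,v) := by
    rw [edist_eq_sInf]
    apply le_sInf
    rintro z ⟨w, rfl⟩
    obtain ⟨p, ⟨q, hpq⟩, hcond⟩ := proj_del_right' w
    by_cases hp0 : p.length = 0
    · obtain ⟨q0, hq0⟩ := hcond rfl hp0
      calc H'.edist u v + 1 ≤ (H'.deleteEdges {s(h,h')}).edist u v :=
            (ENat.add_one_le_iff hfin).mpr hlt
        _ ≤ q0.length := edist_le _
        _ = w.length := by exact_mod_cast hq0
    · calc H'.edist u v + 1 ≤ (q.length : ℕ∞) + p.length := by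
            refine add_le_add (edist_le _) ?_
            exact_mod_cast Nat.one_le_iff_ne_zero.mpr hp0
        _ = w.length := by rw [← hpq]; push_cast; ring
  calc (G'.boxProd H').edist (a, u) (a, v) = H'.edist u v := by
        rw [boxProd_edist', edist_self, zero_add]
    _ < H'.edist u v + 1 := (ENat.lt_add_one_iff hfin).mpr le_rfl
    _ ≤ _ := key

private lemma forward_left [Nonempty β'] (hH : H'.Connected)
    (hcrit : EdgeCritical (G'.boxProd H'))
    (g g' : α') (hgg' : G'.Adj g g') : IsDistCriticalEdge G' g g' := by
  classical
  set h : β' := Classical.arbitrary β' with hh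
  obtain ⟨x, y, hne, hlt⟩ :=
    hcrit (g, h) (g', h) (boxProd_adj.mpr (Or.inl ⟨hgg', rfl⟩))
  by_contra hnc
  unfold IsDistCriticalEdge at hnc
  push_neg at hnc
  obtain ⟨u, b1⟩ := x
  obtain ⟨v, b2⟩ := y
  refine absurd hlt (not_lt.mpr ?_)
  by_cases hcase : ({u, v} : Set α') = {g, g'}
  · rcases Set.pair_eq_pair_iff.mp hcase with ⟨hu, hv⟩ | ⟨hu, hv⟩ <;> subst hu <;> subst hv
    · refine pair_case_left hH hgg' fun ⟨e1, e2⟩ => ?_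
      subst e1; subst e2
      exact hne rfl
    · rw [Sym2.eq_swap]
      refine pair_case_left hH hgg'.symm fun ⟨e1, e2⟩ => ?_
      subst e1; subst e2
      exact hne (Set.pair_comm _ _)
  · calc ((G'.boxProd H').deleteEdges {s(((g,h):α'×β'),((g',h):α'×β'))}).edist (u,b1) (v,b2)
        ≤ ((G'.deleteEdges {s(g,g')}).boxProd H').edist (u,b1) (v,b2) :=
          edist_anti (del_boxProd_le_left' hgg'.ne h)
      _ = (G'.deleteEdges {s(g,g')}).edist u v + H'.edist b1 b2 := boxProd_edist' _ _ _ _ _ _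
      _ ≤ G'.edist u v + H'.edist b1 b2 := add_le_add_left (hnc u v hcase) _
      _ = (G'.boxProd H').edist (u,b1) (v,b2) := (boxProd_edist' _ _ _ _ _ _).symm

private lemma forward_right [Nonempty α'] (hG : G'.Connected)
    (hcrit : EdgeCritical (G'.boxProd H'))
    (h h' : β') (hhh' : H'.Adj h h') : IsDistCriticalEdge H' h h' := by
  classical
  set g : α' := Classical.arbitrary α' with hg
  obtain ⟨x, y, hne, hlt⟩ :=
    hcrit (g, h) (g, h') (boxProd_adj.mpr (Or.inr ⟨hhh', rfl⟩))
  by_contra hnc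
  unfold IsDistCriticalEdge at hnc
  push_neg at hnc
  obtain ⟨a1, b1⟩ := x
  obtain ⟨a2, b2⟩ := y
  refine absurd hlt (not_lt.mpr ?_)
  by_cases hcase : ({b1, b2} : Set β') = {h, h'}
  · rcases Set.pair_eq_pair_iff.mp hcase with ⟨hu, hv⟩ | ⟨hu, hv⟩ <;> subst hu <;> subst hv
    · refine pair_case_right hG hhh' fun ⟨e1, e2⟩ => ?_
      subst e1; subst e2
      exact hne rfl
    · rw [Sym2.eq_swap]
      refine pair_case_right hG hhh'.symm fun ⟨e1, e2⟩ => ?_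
      subst e1; subst e2
      exact hne (Set.pair_comm _ _)
  · calc ((G'.boxProd H').deleteEdges {s(((g,h):α'×β'),((g,h'):α'×β'))}).edist (a1,b1) (a2,b2)
        ≤ (G'.boxProd (H'.deleteEdges {s(h,h')})).edist (a1,b1) (a2,b2) :=
          edist_anti (del_boxProd_le_right' hhh'.ne g)
      _ = G'.edist a1 a2 + (H'.deleteEdges {s(h,h')}).edist b1 b2 := boxProd_edist' _ _ _ _ _ _
      _ ≤ G'.edist a1 a2 + H'.edist b1 b2 := add_le_add_right (hnc b1 b2 hcase) _
      _ = (G'.boxProd H').edist (a1,b1) (a2,b2) := (boxProd_edist' _ _ _ _ _ _).symm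

end BoxProdCritical

/-- For connected nonempty graphs `G` and `H`, the Cartesian product `G □ H`
is edge-critical iff both `G` and `H` are edge-critical. -/


theorem stmt_5 {α β : Type*} [Nonempty α] [Nonempty β] (G : SimpleGraph α) (H : SimpleGraph β)
    (hG : G.Connected) (hH : H.Connected) :
    EdgeCritical (G.boxProd H) ↔ EdgeCritical G ∧ EdgeCritical H := by
  constructor
  · intro hcrit
    exact ⟨fun g g' hgg' => forward_left hH hcrit g g' hgg',
      fun h h' hhh' => forward_right hG hcrit h h' hhh'⟩
  · rintro ⟨hGc, hHc⟩ x y hadj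
    obtain ⟨g, b⟩ := x
    obtain ⟨g', b'⟩ := y
    rcases hadj with ⟨hGadj, (h2 : b = b')⟩ | ⟨hHadj, (h1 : g = g')⟩
    · subst h2
      exact backward_left hG g g' b (hGc g g' hGadj)
    · subst h1
      exact backward_right hH b b' g (hHc b b' hHadj)
end

section
/- If G is a triangle-free, edge-critical simple graph with diameter exactly 2 and minimum degree at least 2, then every edge of G lies on an induced 5-cycle. -/
open SimpleGraph

universe u

variable {V : Type*}

/-- The edge `uv` lies on an induced `5`-cycle `u v c d e`. -/
def EdgeOnInducedC5 (G : SimpleGraph V) (u v : V) : Prop :=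
  ∃ c d e : V, u ≠ c ∧ u ≠ d ∧ v ≠ d ∧ v ≠ e ∧ c ≠ e ∧
    G.Adj u v ∧ G.Adj v c ∧ G.Adj c d ∧ G.Adj d e ∧ G.Adj e u ∧
    ¬ G.Adj u c ∧ ¬ G.Adj u d ∧ ¬ G.Adj v d ∧ ¬ G.Adj v e ∧ ¬ G.Adj c e


section Aux
variable (G : SimpleGraph V)

lemma aux_walk_len2 {G : SimpleGraph V} {a b : V} (p : G.Walk a b) (h : p.length = 2) :
    ∃ c, G.Adj a c ∧ G.Adj c b := by
  cases p with
  | nil => simp at h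
  | cons h1 q =>
    cases q with
    | nil => simp at h
    | cons h2 r =>
      cases r with
      | nil => exact ⟨_, h1, h2⟩
      | cons h3 s => simp [SimpleGraph.Walk.length] at h

lemma aux_edist_two {G : SimpleGraph V} (hdiam : G.ediam = 2) {a b : V}
    (hne : a ≠ b) (hna : ¬ G.Adj a b) : G.edist a b = 2 := by
  have hle : G.edist a b ≤ 2 := hdiam ▸ G.edist_le_ediam
  have h0 : G.edist a b ≠ 0 := by simp [SimpleGraph.edist_eq_zero_iff, hne]
  have h1 : G.edist a b ≠ 1 := by simp [SimpleGraph.edist_eq_one_iff_adj, hna]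
  have htop : G.edist a b ≠ ⊤ := ne_top_of_le_ne_top (by decide) hle
  lift G.edist a b to ℕ using htop with n hn
  have h2 : n ≤ 2 := by exact_mod_cast hle
  have h0' : n ≠ 0 := by exact_mod_cast h0
  have h1' : n ≠ 1 := by exact_mod_cast h1
  have : n = 2 := by omega
  exact_mod_cast this

lemma aux_common {G : SimpleGraph V} (hdiam : G.ediam = 2) {a b : V}
    (hne : a ≠ b) (hna : ¬ G.Adj a b) : ∃ c, G.Adj a c ∧ G.Adj c b := by
  obtain ⟨p, hp⟩ := SimpleGraph.exists_walk_of_edist_eq_coe (k := 2)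
    (by exact_mod_cast aux_edist_two hdiam hne hna)
  exact aux_walk_len2 p hp

lemma aux_symm {G : SimpleGraph V} {u v : V} (h : EdgeOnInducedC5 G v u) :
    EdgeOnInducedC5 G u v := by
  obtain ⟨c, d, e, h1, h2, h3, h4, h5, a1, a2, a3, a4, a5, n1, n2, n3, n4, n5⟩ := h
  exact ⟨e, d, c, h4, h3, h2, h1, fun hh => h5 hh.symm, a1.symm, a5.symm, a4.symm,
    a3.symm, a2.symm, n4, n3, n2, n1, fun hh => n5 hh.symm⟩

lemma aux_build {G : SimpleGraph V} [Fintype V] [DecidableRel G.Adj]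
    (htf : G.CliqueFree 3) (hdiam : G.ediam = 2) (hdeg : ∀ v : V, 2 ≤ G.degree v)
    {u v z : V} (huv : G.Adj u v) (h1 : G.Adj v z) (h2 : ¬ G.Adj u z) (h3 : u ≠ z)
    (huniq : ∀ t, G.Adj u t → G.Adj t z → t = v) : EdgeOnInducedC5 G u v := by
  classical
  have tri : ∀ a b c : V, G.Adj a b → G.Adj a c → G.Adj b c → False := fun a b c hab hac hbc =>
    htf {a, b, c} (SimpleGraph.is3Clique_triple_iff.mpr ⟨hab, hac, hbc⟩)
  obtain ⟨w, hw, hwv⟩ := Finset.exists_mem_ne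
    (s := G.neighborFinset u) (lt_of_lt_of_le one_lt_two (hdeg u)) v
  rw [SimpleGraph.mem_neighborFinset] at hw
  have hvw : ¬ G.Adj v w := fun h => tri u v w huv hw h
  have hwz : ¬ G.Adj w z := fun h => hwv (huniq w hw h)
  have hwzne : w ≠ z := fun h => h2 (h ▸ hw)
  obtain ⟨t, ht1, ht2⟩ := aux_common hdiam hwzne hwz
  have hut : ¬ G.Adj u t := fun h => hvw ((huniq t h ht2) ▸ ht1).symm
  have hvt : ¬ G.Adj v t := fun h => tri v t z h h1 ht2
  have hune : u ≠ t := fun h => h2 (h ▸ ht2)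
  have hvne : v ≠ t := fun h => hvw (h ▸ ht1).symm
  exact ⟨z, t, w, h3, hune, hvne, fun h => hwv h.symm, fun h => hwzne h.symm,
    huv, h1, ht2.symm, ht1.symm, hw.symm, h2, hut, hvt, hvw, fun hh => hwz hh.symm⟩

end Aux

/-- In a triangle-free, edge-critical graph of diameter exactly `2` with
minimum degree at least `2`, every edge lies on an induced `5`-cycle. -/
theorem stmt_6 (G : SimpleGraph V) [Fintype V] [DecidableRel G.Adj]
    (htf : G.CliqueFree 3) (hec : EdgeCritical G) (hdiam : G.ediam = 2)
    (hdeg : ∀ v : V, 2 ≤ G.degree v) :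
    ∀ u v : V, G.Adj u v → EdgeOnInducedC5 G u v := by
  intro u v huv
  obtain ⟨a, b, hset, hlt⟩ := hec u v huv
  have hne : a ≠ b := by
    rintro rfl
    simp [SimpleGraph.edist_self] at hlt
  have hnab : ¬ G.Adj a b := by
    intro hadj
    have hsab : ¬ (s(a, b) : Sym2 V) = s(u, v) := by
      intro h
      rw [Sym2.eq_iff] at h
      apply hset
      rcases h with ⟨rfl, rfl⟩ | ⟨rfl, rfl⟩
      · rfl
      · exact Set.pair_comm _ _
    have hadj' : (G.deleteEdges {s(u, v)}).Adj a b := by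
      rw [SimpleGraph.deleteEdges_adj]
      exact ⟨hadj, by simpa using hsab⟩
    rw [SimpleGraph.edist_eq_one_iff_adj.mpr hadj,
      SimpleGraph.edist_eq_one_iff_adj.mpr hadj'] at hlt
    exact lt_irrefl _ hlt
  have h2 : G.edist a b = 2 := aux_edist_two hdiam hne hnab
  have hnc : ∀ c, G.Adj a c → G.Adj c b →
      (s(a, c) : Sym2 V) = s(u, v) ∨ (s(c, b) : Sym2 V) = s(u, v) := by
    intro c hac hcb
    by_contra hcon
    push_neg at hcon
    have hadj1 : (G.deleteEdges {s(u, v)}).Adj a c := by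
      rw [SimpleGraph.deleteEdges_adj]
      exact ⟨hac, by simpa using hcon.1⟩
    have hadj2 : (G.deleteEdges {s(u, v)}).Adj c b := by
      rw [SimpleGraph.deleteEdges_adj]
      exact ⟨hcb, by simpa using hcon.2⟩
    have hle : (G.deleteEdges {s(u, v)}).edist a b ≤ 2 := by
      simpa using SimpleGraph.edist_le
        (SimpleGraph.Walk.cons hadj1 (SimpleGraph.Walk.cons hadj2 SimpleGraph.Walk.nil))
    rw [h2] at hlt
    exact absurd hlt (not_lt.mpr hle)
  obtain ⟨c₀, hc1, hc2⟩ := aux_common hdiam hne hnab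
  have huvne : u ≠ v := huv.ne
  rcases hnc c₀ hc1 hc2 with h | h <;> rw [Sym2.eq_iff] at h <;>
    rcases h with ⟨rfl, rfl⟩ | ⟨rfl, rfl⟩
  · -- u = a, v = c₀ : convex P3 a - c₀ - b
    refine aux_build htf hdiam hdeg huv hc2 hnab hne ?_
    intro t h1 h2'
    rcases hnc t h1 h2' with h | h <;> rw [Sym2.eq_iff] at h
    · rcases h with ⟨-, rfl⟩ | ⟨h3, -⟩
      · rfl
      · exact absurd h3 huvne
    · rcases h with ⟨rfl, -⟩ | ⟨-, h3⟩
      · exact absurd h1 (G.loopless.irrefl _)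
      · exact absurd h3 hne.symm
  · -- u = c₀, v = a : convex P3 a - c₀ - b, edge reversed
    refine aux_symm (aux_build htf hdiam hdeg huv.symm hc2 hnab hne ?_)
    intro t h1 h2'
    rcases hnc t h1 h2' with h | h <;> rw [Sym2.eq_iff] at h
    · rcases h with ⟨h3, -⟩ | ⟨-, rfl⟩
      · exact absurd h3 huvne.symm
      · rfl
    · rcases h with ⟨-, h3⟩ | ⟨rfl, -⟩
      · exact absurd h3 hne.symm
      · exact absurd h1 (G.loopless.irrefl _)
  · -- u = c₀, v = b : convex P3 a - c₀ - b with z = a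
    refine aux_symm (aux_build htf hdiam hdeg huv.symm hc1.symm
      (fun h => hnab h.symm) hne.symm ?_)
    intro t h1 h2'
    rcases hnc t h2'.symm h1.symm with h | h <;> rw [Sym2.eq_iff] at h
    · rcases h with ⟨h3, -⟩ | ⟨h3, -⟩
      · exact absurd h3 hc1.ne
      · exact absurd h3 hne
    · rcases h with ⟨rfl, -⟩ | ⟨-, h3⟩
      · rfl
      · exact absurd h3 huvne.symm
  · -- u = b, v = c₀ : convex P3 b - c₀ - a with z = a
    refine aux_build htf hdiam hdeg huv hc1.symm (fun h => hnab h.symm) hne.symm ?_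
    intro t h1 h2'
    rcases hnc t h2'.symm h1.symm with h | h <;> rw [Sym2.eq_iff] at h
    · rcases h with ⟨h3, -⟩ | ⟨h3, -⟩
      · exact absurd h3 hne
      · exact absurd h3 hc1.ne
    · rcases h with ⟨-, h3⟩ | ⟨rfl, -⟩
      · exact absurd h3 huvne
      · rfl
end

section
/- For a connected simple graph G, the following statements are equivalent: (i) every independent set of G is a total mutual-visibility set; (ii) every independent set of G is a dual mutual-visibility set; (iii) G is a dense diamond graph. -/
open SimpleGraph

universe u

variable {V : Type*}

/-- Vertices `u` and `v` lie on a common diamond (`K₄` minus an edge, as a subgraph),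
necessarily as its two nonadjacent vertices when `u, v` are nonadjacent. -/
def OnCommonDiamond (G : SimpleGraph V) (u v : V) : Prop :=
  ∃ a b : V, a ≠ b ∧ u ≠ v ∧ G.Adj a b ∧ G.Adj u a ∧ G.Adj u b ∧ G.Adj v a ∧ G.Adj v b

/-- A dense diamond graph: connected, and any two vertices at distance two lie on a
common diamond. -/
def DenseDiamond (G : SimpleGraph V) : Prop :=
  G.Connected ∧ ∀ u v : V, G.dist u v = 2 → OnCommonDiamond G u v

private lemma key_s7 (G : SimpleGraph V) (hG : G.Connected)
    (hD : ∀ u v : V, G.dist u v = 2 → ∃ a b : V, a ≠ b ∧ u ≠ v ∧ G.Adj a b ∧ G.Adj u a ∧ G.Adj u b ∧ G.Adj v a ∧ G.Adj v b)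
    (X : Set V) (hX : ∀ u ∈ X, ∀ v ∈ X, ¬ G.Adj u v) :
    ∀ n : ℕ, ∀ u v : V, G.dist u v = n → Visible G X u v := by
  intro n
  induction n using Nat.strong_induction_on with
  | _ n ih =>
    intro u v hdist
    obtain ⟨P, hP⟩ := hG.exists_walk_length_eq_dist u v
    have hPn : P.length = n := by rw [hP, hdist]
    rcases n with _ | _ | m
    · have huv : u = v := hG.dist_eq_zero_iff.mp hdist
      subst huv
      exact ⟨Walk.nil, by simp [hdist], by simp⟩
    · cases P with
      | nil => simp at hPn
      | cons h rest =>
        cases rest with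
        | nil => exact ⟨Walk.cons h Walk.nil, by simp [hdist], by simp⟩
        | cons h2 R => simp at hPn
    · cases P with
      | nil => simp at hPn
      | cons h1 rest =>
        cases rest with
        | nil => simp at hPn
        | cons h2 R =>
          rename_i x y
          have hRlen : R.length = m := by simpa using hPn
          have hdyv : G.dist y v = m := by
            have h1' : G.dist y v ≤ m := hRlen ▸ dist_le R
            have h2' : G.dist u v ≤ G.dist u y + G.dist y v := hG.dist_triangle
            have h3' : G.dist u y ≤ 2 := by
              simpa using dist_le (Walk.cons h1 (Walk.cons h2 Walk.nil))
            omega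
          by_cases hx : x ∈ X
          · -- replace x
            have hy : y ∉ X := fun hy => hX x hx y hy h2
            have hdxy : G.dist u y = 2 := by
              have h2' : G.dist u v ≤ G.dist u y + G.dist y v := hG.dist_triangle
              have h3' : G.dist u y ≤ 2 := by
                simpa using dist_le (Walk.cons h1 (Walk.cons h2 Walk.nil))
              omega
            obtain ⟨a, b, -, -, hab, hua, hub, hya, hyb⟩ := hD u y hdxy
            obtain ⟨c, hcX, huc, hyc⟩ : ∃ c, c ∉ X ∧ G.Adj u c ∧ G.Adj y c := by
              by_cases ha : a ∈ X
              · exact ⟨b, fun hb => hX a ha b hb hab, hub, hyb⟩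
              · exact ⟨a, ha, hua, hya⟩
            obtain ⟨q, hqlen, hqsup⟩ := ih m (by omega) y v hdyv
            refine ⟨Walk.cons huc (Walk.cons hyc.symm q), by simp [hdist, hqlen, hdyv], ?_⟩
            intro w hw hwX
            simp only [Walk.support_cons, List.mem_cons] at hw
            rcases hw with rfl | rfl | hw
            · exact Or.inl rfl
            · exact absurd hwX hcX
            · rcases hqsup w hw hwX with rfl | rfl
              · exact absurd hwX hy
              · exact Or.inr rfl
          · -- keep u - x, recurse on x v
            have hdxv : G.dist x v = m + 1 := by
              have h1' : G.dist x v ≤ m + 1 := by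
                simpa [hRlen] using dist_le (Walk.cons h2 R)
              have h2' : G.dist u v ≤ G.dist u x + G.dist x v := hG.dist_triangle
              have h3' : G.dist u x ≤ 1 := by simpa using dist_le (Walk.cons h1 Walk.nil)
              omega
            obtain ⟨q, hqlen, hqsup⟩ := ih (m+1) (by omega) x v hdxv
            refine ⟨Walk.cons h1 q, by simp [hdist, hqlen, hdxv], ?_⟩
            intro w hw hwX
            simp only [Walk.support_cons, List.mem_cons] at hw
            rcases hw with rfl | hw
            · exact Or.inl rfl
            · rcases hqsup w hw hwX with rfl | rfl
              · exact absurd hwX hx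
              · exact Or.inr rfl

/-- For a connected graph, the following are equivalent: every independent set
is a total MV set; every independent set is a dual MV set; the graph is a dense diamond
graph. -/
theorem stmt_7 (G : SimpleGraph V) (hG : G.Connected) :
    List.TFAE [(∀ X : Set V, IsIndependentSet G X → IsTotalMVSet G X),
      (∀ X : Set V, IsIndependentSet G X → IsDualMVSet G X),
      DenseDiamond G] := by
  tfae_have 1 → 2
  · intro h X hX
    exact ⟨fun u _ v _ => h X hX u v, fun u _ v _ => h X hX u v⟩
  tfae_have 2 → 3
  · intro h
    refine ⟨hG, fun u v hd => ?_⟩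
    have huv : u ≠ v := by
      intro he; rw [he, (hG.dist_eq_zero_iff).mpr rfl] at hd; exact two_ne_zero hd.symm
    by_contra hnd
    have hind : IsIndependentSet G {w | G.Adj u w ∧ G.Adj w v} := by
      intro a ha b hb hab
      exact hnd ⟨a, b, G.ne_of_adj hab, huv, hab, ha.1, hb.1, ha.2.symm, hb.2.symm⟩
    obtain ⟨-, hout⟩ := h _ hind
    have hu : u ∉ {w | G.Adj u w ∧ G.Adj w v} := fun hc => G.irrefl hc.1
    have hv : v ∉ {w | G.Adj u w ∧ G.Adj w v} := fun hc => G.irrefl hc.2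
    obtain ⟨p, hlen, hsup⟩ := hout u hu v hv
    rw [hd] at hlen
    cases p with
    | nil => simp at hlen
    | cons h1 q =>
      cases q with
      | nil => simp at hlen
      | cons h2 r =>
        cases r with
        | nil =>
          rename_i x
          have hxmem : x ∈ ({w | G.Adj u w ∧ G.Adj w v} : Set V) := ⟨h1, h2⟩
          rcases hsup x (by simp) hxmem with rfl | rfl
          · exact G.irrefl h1
          · exact G.irrefl h2
        | cons h3 r' => simp at hlen
  tfae_have 3 → 1
  · rintro ⟨hc, hdd⟩ X hX u v
    exact key_s7 G hc (fun a b hab => hdd a b hab) X hX (G.dist u v) u v rfl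
  tfae_finish
end

section
/- For a connected simple graph G, the following statements are equivalent: (i) every total mutual-visibility set of G is independent; (ii) for every edge uv of G, either u or v is the middle vertex of a convex P3, or uv is the middle edge of a convex diamond. -/
open SimpleGraph

universe u

variable {V : Type*}

/-- `uv` is the middle edge of a convex diamond: there are nonadjacent vertices `w, x`
whose only common neighbors are `u` and `v`, all five other pairs being adjacent. -/
def IsMiddleEdgeOfConvexDiamond (G : SimpleGraph V) (u v : V) : Prop :=
  ∃ w x : V, w ≠ x ∧ ¬ G.Adj w x ∧ G.Adj u v ∧ G.Adj w u ∧ G.Adj w v ∧ G.Adj x u ∧ G.Adj x v ∧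
    ∀ z : V, G.Adj w z → G.Adj z x → z = u ∨ z = v

lemma dist_two_aux {G : SimpleGraph V} (hG : G.Connected) {a m b : V}
    (h1 : G.Adj a m) (h2 : G.Adj m b) (hab : a ≠ b) (hnadj : ¬ G.Adj a b) :
    G.dist a b = 2 := by
  have hle : G.dist a b ≤ 2 := by
    have := SimpleGraph.dist_le (Walk.cons h1 (Walk.cons h2 Walk.nil))
    simpa using this
  have h0 : G.dist a b ≠ 0 := fun h => hab (hG.dist_eq_zero_iff.mp h)
  have h1' : G.dist a b ≠ 1 := by
    intro h; exact hnadj (SimpleGraph.dist_eq_one_iff_adj.mp h)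
  omega

lemma not_visible_of_mid {G : SimpleGraph V} (hG : G.Connected) {X : Set V}
    {a b : V} (hab : a ≠ b) (hnadj : ¬ G.Adj a b)
    (hmid : ∀ z, G.Adj a z → G.Adj z b → z ∈ X) {m : V} (h1 : G.Adj a m) (h2 : G.Adj m b) :
    ¬ Visible G X a b := by
  rintro ⟨p, hlen, hsup⟩
  rw [dist_two_aux hG h1 h2 hab hnadj] at hlen
  cases p with
  | nil => simp at hlen
  | @cons _ c _ h q =>
    cases q with
    | nil => simp at hlen
    | @cons _ d _ h' r =>
      simp only [Walk.length_cons] at hlen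
      have hr0 : r.length = 0 := by omega
      have hdb : d = b := Walk.eq_of_length_eq_zero hr0
      subst hdb
      have hcX : c ∈ X := hmid c h h'
      have hcs : c ∈ (Walk.cons h (Walk.cons h' r)).support := by simp
      rcases hsup c hcs hcX with rfl | rfl
      · exact G.loopless.irrefl _ h
      · exact G.loopless.irrefl _ h'

lemma total_of_no {G : SimpleGraph V} (hG : G.Connected) {u v : V} (huv : G.Adj u v)
    (h1 : ∀ a b, ¬ IsConvexP3 G a u b) (h2 : ∀ a b, ¬ IsConvexP3 G a v b)
    (h3 : ¬ IsMiddleEdgeOfConvexDiamond G u v) :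
    IsTotalMVSet G ({u, v} : Set V) := by
  suffices H : ∀ n : ℕ, ∀ a b : V, G.dist a b = n → Visible G ({u, v} : Set V) a b by
    intro a b; exact H _ a b rfl
  intro n
  induction n using Nat.strong_induction_on with
  | _ n ih =>
    intro a b hn
    match n, hn with
    | 0, hn =>
      have hab : a = b := hG.dist_eq_zero_iff.mp hn
      subst hab
      exact ⟨Walk.nil, by simp [hn], by simp⟩
    | 1, hn =>
      have hadj : G.Adj a b := SimpleGraph.dist_eq_one_iff_adj.mp hn
      refine ⟨Walk.cons hadj Walk.nil, by simp [hn], ?_⟩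
      intro w hw _
      simpa using hw
    | (k+2), hn =>
      by_cases hex : ∃ c, G.Adj a c ∧ G.dist c b = k + 1 ∧ c ≠ u ∧ c ≠ v
      · obtain ⟨c, hac, hcb, hcu, hcv⟩ := hex
        obtain ⟨r, hrlen, hrsup⟩ := ih (k+1) (by omega) c b hcb
        refine ⟨Walk.cons hac r, by simp [hrlen, hcb, hn], ?_⟩
        intro w hw hwX
        simp only [Walk.support_cons, List.mem_cons] at hw
        rcases hw with rfl | hw
        · exact Or.inl rfl
        · rcases hrsup w hw hwX with rfl | rfl
          · rcases hwX with rfl | rfl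
            · exact absurd rfl hcu
            · exact absurd rfl hcv
          · exact Or.inr rfl
      · push_neg at hex
        have hdec : ∀ c, G.Adj a c → G.dist c b = k + 1 → c = u ∨ c = v := by
          intro c h h'
          by_cases hcu : c = u
          · exact Or.inl hcu
          · exact Or.inr (hex c h h' hcu)
        exfalso
        obtain ⟨p, hp⟩ := (hG a b).exists_walk_length_eq_dist
        rw [hn] at hp
        cases p with
        | nil => simp at hp
        | @cons _ c _ hac q =>
          simp only [Walk.length_cons] at hp
          have hqlen : q.length = k + 1 := by omega
          have hcb : G.dist c b = k + 1 := by
            have hle : G.dist c b ≤ k + 1 := hqlen ▸ SimpleGraph.dist_le q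
            have htri : G.dist a b ≤ G.dist a c + G.dist c b := hG.dist_triangle
            rw [hn, SimpleGraph.dist_eq_one_iff_adj.mpr hac] at htri
            omega
          cases q with
          | nil => simp at hqlen
          | @cons _ e _ hce r =>
            simp only [Walk.length_cons] at hqlen
            have hrlen : r.length = k := by omega
            have heb : G.dist e b = k := by
              have hle : G.dist e b ≤ k := hrlen ▸ SimpleGraph.dist_le r
              have htri : G.dist c b ≤ G.dist c e + G.dist e b := hG.dist_triangle
              rw [hcb, SimpleGraph.dist_eq_one_iff_adj.mpr hce] at htri
              omega
            have hnae : ¬ G.Adj a e := by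
              intro h
              have htri : G.dist a b ≤ G.dist a e + G.dist e b := hG.dist_triangle
              rw [hn, heb, SimpleGraph.dist_eq_one_iff_adj.mpr h] at htri
              omega
            have hane : a ≠ e := by
              intro h; rw [h, heb] at hn; omega
            have hcomm : ∀ z, G.Adj a z → G.Adj z e → z = u ∨ z = v := by
              intro z hz1 hz2
              have hzle : G.dist z b ≤ k + 1 := by
                have htri : G.dist z b ≤ G.dist z e + G.dist e b := hG.dist_triangle
                rw [heb, SimpleGraph.dist_eq_one_iff_adj.mpr hz2] at htri
                omega
              have hzge : G.dist z b = k + 1 := by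
                have htri : G.dist a b ≤ G.dist a z + G.dist z b := hG.dist_triangle
                rw [hn, SimpleGraph.dist_eq_one_iff_adj.mpr hz1] at htri
                omega
              exact hdec z hz1 hzge
            by_cases hu : G.Adj a u ∧ G.Adj u e
            · by_cases hv' : G.Adj a v ∧ G.Adj v e
              · exact h3 ⟨a, e, hane, hnae, huv, hu.1, hv'.1, hu.2.symm, hv'.2.symm, hcomm⟩
              · refine h1 a e ⟨hu.1, hu.2, hnae, hane, ?_⟩
                intro z hz1 hz2
                rcases hcomm z hz1 hz2 with rfl | rfl
                · rfl
                · exact absurd ⟨hz1, hz2⟩ hv'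
            · by_cases hv' : G.Adj a v ∧ G.Adj v e
              · refine h2 a e ⟨hv'.1, hv'.2, hnae, hane, ?_⟩
                intro z hz1 hz2
                rcases hcomm z hz1 hz2 with rfl | rfl
                · exact absurd ⟨hz1, hz2⟩ hu
                · rfl
              · rcases hdec c hac hcb with rfl | rfl
                · exact hu ⟨hac, hce⟩
                · exact hv' ⟨hac, hce⟩

/-- In a connected graph, every total MV set is independent iff for each edge
`uv`, one of `u`, `v` is the middle vertex of a convex `P₃`, or `uv` is the middle edge of a
convex diamond. -/
theorem stmt_8 (G : SimpleGraph V) (hG : G.Connected) :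
    (∀ X : Set V, IsTotalMVSet G X → IsIndependentSet G X) ↔
    (∀ u v : V, G.Adj u v →
      (∃ a b : V, IsConvexP3 G a u b) ∨ (∃ a b : V, IsConvexP3 G a v b) ∨
        IsMiddleEdgeOfConvexDiamond G u v) := by
  constructor
  · intro h u v hadj
    by_contra hcon
    push_neg at hcon
    obtain ⟨hc1, hc2, hc3⟩ := hcon
    have htot := total_of_no hG hadj (fun a b => hc1 a b) (fun a b => hc2 a b) hc3
    exact h _ htot u (Or.inl rfl) v (Or.inr rfl) hadj
  · intro h X hX u hu v hv hadj
    rcases h u v hadj with ⟨a, b, hab⟩ | ⟨a, b, hab⟩ | hd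
    · obtain ⟨h1, h2, h3, h4, h5⟩ := hab
      exact not_visible_of_mid hG h4 h3 (fun z hz1 hz2 => (h5 z hz1 hz2) ▸ hu) h1 h2 (hX a b)
    · obtain ⟨h1, h2, h3, h4, h5⟩ := hab
      exact not_visible_of_mid hG h4 h3 (fun z hz1 hz2 => (h5 z hz1 hz2) ▸ hv) h1 h2 (hX a b)
    · obtain ⟨w, x, h1, h2, h3, h4, h5, h6, h7, h8⟩ := hd
      refine not_visible_of_mid hG h1 h2 ?_ h4 h6.symm (hX w x)
      intro z hz1 hz2
      rcases h8 z hz1 hz2 with rfl | rfl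
      · exact hu
      · exact hv
end

section
/- Let G be a connected simple graph. If every dual mutual-visibility set of G is independent, then for every edge uv of G, either u or v is the middle vertex of a convex P3, or uv is the middle edge of a convex diamond. -/
open SimpleGraph

universe u

variable {V : Type*}

lemma diamond_symm {G : SimpleGraph V} {u v : V} (h : IsMiddleEdgeOfConvexDiamond G u v) :
    IsMiddleEdgeOfConvexDiamond G v u := by
  obtain ⟨w, x, h1, h2, h3, h4, h5, h6, h7, h8⟩ := h
  exact ⟨w, x, h1, h2, h3.symm, h5, h4, h7, h6, fun z hz hz' => (h8 z hz hz').symm⟩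

lemma step {G : SimpleGraph V} (hG : G.Connected) {u v a b : V} {m : ℕ}
    (hP3u : ¬ ∃ x y, IsConvexP3 G x u y)
    (hD : ¬ IsMiddleEdgeOfConvexDiamond G u v) (huv : G.Adj u v)
    (hau : G.Adj a u) (hub : G.dist u b = m) (hab : G.dist a b = m + 1)
    (hbu : b ≠ u) :
    ∃ z, z ≠ u ∧ z ≠ v ∧ G.Adj a z ∧ G.dist z b = m := by
  -- get a shortest walk from u to b
  obtain ⟨p, hp⟩ := hG.exists_walk_length_eq_dist u b
  cases p with
  | nil => exact absurd rfl hbu.symm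
  | @cons _ q₀ _ hq₀ r =>
    simp only [SimpleGraph.Walk.length_cons, hub] at hp
    -- so r.length = m - 1; set k
    obtain ⟨k, hk⟩ : ∃ k, m = k + 1 := ⟨r.length, hp.symm⟩
    have hrk : r.length = k := by omega
    have hq₀b : G.dist q₀ b = k := by
      have h1 : G.dist q₀ b ≤ k := hrk ▸ SimpleGraph.dist_le r
      have h2 : G.dist u b ≤ G.dist u q₀ + G.dist q₀ b := hG.dist_triangle
      have h3 : G.dist u q₀ ≤ 1 := by
        rw [← SimpleGraph.dist_eq_one_iff_adj] at hq₀
        omega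
      omega
    have hanq : ¬ G.Adj a q₀ := by
      intro hadj
      have h2 : G.dist a b ≤ G.dist a q₀ + G.dist q₀ b := hG.dist_triangle
      rw [SimpleGraph.dist_eq_one_iff_adj.mpr hadj] at h2
      omega
    have haq : a ≠ q₀ := by
      rintro rfl; omega
    -- from non-P3 get a common neighbor z ≠ u
    have hz0 : ∃ z, G.Adj a z ∧ G.Adj z q₀ ∧ z ≠ u := by
      by_contra hc
      push_neg at hc
      exact hP3u ⟨a, q₀, hau, hq₀, hanq, haq, fun z h1 h2 => hc z h1 h2⟩
    by_cases hzv : ∃ z, G.Adj a z ∧ G.Adj z q₀ ∧ z ≠ u ∧ z ≠ v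
    · obtain ⟨z, hz1, hz2, hz3, hz4⟩ := hzv
      refine ⟨z, hz3, hz4, hz1, ?_⟩
      have h1 : G.dist z b ≤ G.dist z q₀ + G.dist q₀ b := hG.dist_triangle
      have h2 : G.dist z q₀ ≤ 1 := le_of_eq (SimpleGraph.dist_eq_one_iff_adj.mpr hz2)
      have h3 : G.dist a b ≤ G.dist a z + G.dist z b := hG.dist_triangle
      have h4 : G.dist a z ≤ 1 := le_of_eq (SimpleGraph.dist_eq_one_iff_adj.mpr hz1)
      omega
    · exfalso
      push_neg at hzv
      obtain ⟨z0, hz1, hz2, hz3⟩ := hz0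
      have hz0v : z0 = v := hzv z0 hz1 hz2 hz3
      subst hz0v
      exact hD ⟨a, q₀, haq, hanq, huv, hau, hz1, hq₀.symm, hz2.symm,
        fun z h1 h2 => by
          by_cases hu : z = u
          · exact Or.inl hu
          · exact Or.inr (hzv z h1 h2 hu)⟩

lemma key_s9 {G : SimpleGraph V} (hG : G.Connected) {u v : V}
    (hP3u : ¬ ∃ x y, IsConvexP3 G x u y) (hP3v : ¬ ∃ x y, IsConvexP3 G x v y)
    (hD : ¬ IsMiddleEdgeOfConvexDiamond G u v) (huv : G.Adj u v) :
    ∀ n a b, G.dist a b = n → a ≠ u → a ≠ v → b ≠ u → b ≠ v →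
      ∃ p : G.Walk a b, p.length = G.dist a b ∧ u ∉ p.support ∧ v ∉ p.support := by
  intro n
  induction n using Nat.strong_induction_on with
  | _ n ih =>
    intro a b hab hau hav hbu hbv
    obtain ⟨p, hp⟩ := hG.exists_walk_length_eq_dist a b
    cases p with
    | nil =>
      exact ⟨Walk.nil, hp, by simp [Ne.symm hau], by simp [Ne.symm hav]⟩
    | @cons _ c _ hc q =>
      simp only [SimpleGraph.Walk.length_cons, hab] at hp
      obtain ⟨m, hm⟩ : ∃ m, n = m + 1 := ⟨q.length, hp.symm⟩
      have hqm : q.length = m := by omega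
      have hcb : G.dist c b = m := by
        have h1 : G.dist c b ≤ m := hqm ▸ SimpleGraph.dist_le q
        have h2 : G.dist a b ≤ G.dist a c + G.dist c b := hG.dist_triangle
        have h3 : G.dist a c ≤ 1 := le_of_eq (SimpleGraph.dist_eq_one_iff_adj.mpr hc)
        omega
      -- find a good next vertex z ∉ {u,v} with dist z b = m
      have hgood : ∃ z, z ≠ u ∧ z ≠ v ∧ G.Adj a z ∧ G.dist z b = m := by
        by_cases hcu : c = u
        · exact step hG hP3u hD huv (hcu ▸ hc) (hcu ▸ hcb) (by omega) hbu
        · by_cases hcv : c = v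
          · obtain ⟨z, h1, h2, h3, h4⟩ :=
              step hG hP3v (fun hd => hD (diamond_symm hd)) huv.symm (hcv ▸ hc)
                (hcv ▸ hcb) (by omega) hbv
            exact ⟨z, h2, h1, h3, h4⟩
          · exact ⟨c, hcu, hcv, hc, hcb⟩
      obtain ⟨z, hzu, hzv, haz, hzb⟩ := hgood
      obtain ⟨q', hq', hq'u, hq'v⟩ := ih m (by omega) z b hzb hzu hzv hbu hbv
      refine ⟨Walk.cons haz q', ?_, ?_, ?_⟩
      · rw [Walk.length_cons, hq', hzb, hab]; omega
      · simp only [Walk.support_cons, List.mem_cons]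
        rintro (rfl | hmem)
        · exact hau rfl
        · exact hq'u hmem
      · simp only [Walk.support_cons, List.mem_cons]
        rintro (rfl | hmem)
        · exact hav rfl
        · exact hq'v hmem

/-- In a connected graph in which every dual MV set is independent, for every
edge `uv`, one of `u`, `v` is the middle vertex of a convex `P₃`, or `uv` is the middle edge
of a convex diamond. -/
theorem stmt_9 (G : SimpleGraph V) (hG : G.Connected)
    (h : ∀ X : Set V, IsDualMVSet G X → IsIndependentSet G X) :
    ∀ u v : V, G.Adj u v →
      (∃ a b : V, IsConvexP3 G a u b) ∨ (∃ a b : V, IsConvexP3 G a v b) ∨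
        IsMiddleEdgeOfConvexDiamond G u v := by
  intro u v huv
  by_contra hcon
  push_neg at hcon
  obtain ⟨hP3u, hP3v, hD⟩ := hcon
  have hP3u' : ¬ ∃ x y, IsConvexP3 G x u y := by
    rintro ⟨x, y, hxy⟩; exact hP3u x y hxy
  have hP3v' : ¬ ∃ x y, IsConvexP3 G x v y := by
    rintro ⟨x, y, hxy⟩; exact hP3v x y hxy
  have hdual : IsDualMVSet G ({u, v} : Set V) := by
    constructor
    · intro x hx y hy
      by_cases hxy : x = y
      · subst hxy
        refine ⟨Walk.nil, by simp [SimpleGraph.dist_self], ?_⟩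
        intro w hw _
        simp only [Walk.support_nil, List.mem_singleton] at hw
        exact Or.inl hw
      · obtain ⟨p, hp⟩ := hG.exists_walk_length_eq_dist x y
        refine ⟨p, hp, fun w _ hw => ?_⟩
        simp only [Set.mem_insert_iff, Set.mem_singleton_iff] at hx hy hw
        rcases hx with rfl | rfl <;> rcases hy with rfl | rfl <;>
          rcases hw with rfl | rfl <;> tauto
    · intro x hx y hy
      simp only [Set.mem_insert_iff, Set.mem_singleton_iff, not_or] at hx hy
      obtain ⟨p, hp, hu', hv'⟩ :=
        key_s9 hG hP3u' hP3v' hD huv (G.dist x y) x y rfl hx.1 hx.2 hy.1 hy.2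
      refine ⟨p, hp, fun w hwsup hw => ?_⟩
      simp only [Set.mem_insert_iff, Set.mem_singleton_iff] at hw
      rcases hw with rfl | rfl
      · exact absurd hwsup hu'
      · exact absurd hwsup hv'
  have hind := h _ hdual
  exact hind u (by simp) v (by simp) huv
end

section
/- Let G be a simple graph with at least two vertices and let n ≥ 2. Then the strong product G ⊠ K_n is a join graph if and only if G is a join graph. -/
open SimpleGraph

universe u

variable {V : Type*}

/-- The strong product of two simple graphs. -/
def strongProd {α β : Type*} (G : SimpleGraph α) (H : SimpleGraph β) :
    SimpleGraph (α × β) where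
  Adj x y := x ≠ y ∧ (x.1 = y.1 ∨ G.Adj x.1 y.1) ∧ (x.2 = y.2 ∨ H.Adj x.2 y.2)
  symm := by
    constructor
    rintro ⟨g, h⟩ ⟨g', h'⟩ ⟨hne, h1, h2⟩
    exact ⟨hne.symm, h1.imp Eq.symm (fun a => a.symm), h2.imp Eq.symm (fun a => a.symm)⟩
  loopless := by
    constructor
    rintro ⟨g, h⟩ ⟨hne, -, -⟩
    exact hne rfl

/-- The join of two graphs on disjoint vertex sets: their disjoint union together with
all edges between the two sides. -/
def Join {α β : Type*} (G : SimpleGraph α) (H : SimpleGraph β) : SimpleGraph (α ⊕ β) where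
  Adj x y :=
    match x, y with
    | Sum.inl a, Sum.inl a' => G.Adj a a'
    | Sum.inr b, Sum.inr b' => H.Adj b b'
    | Sum.inl _, Sum.inr _ => True
    | Sum.inr _, Sum.inl _ => True
  symm := by
    constructor
    rintro (a | b) (a' | b') h
    · exact h.symm
    · trivial
    · trivial
    · exact h.symm
  loopless := by
    constructor
    rintro (a | b) h
    · exact G.irrefl h
    · exact H.irrefl h

/-- `X` is a join graph if it is isomorphic to the join of two nonempty graphs. -/
def IsJoinGraph {W : Type u} (X : SimpleGraph W) : Prop :=
  ∃ (α β : Type u) (G : SimpleGraph α) (H : SimpleGraph β),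
    Nonempty α ∧ Nonempty β ∧ Nonempty (X ≃g Join G H)

section AuxJoin

variable {W : Type u}

lemma join_adj_inl_inr {α β : Type u} (G : SimpleGraph α) (H : SimpleGraph β) (a : α) (b : β) :
    (Join G H).Adj (Sum.inl a) (Sum.inr b) := by
  show True
  trivial

lemma join_adj_inr_inl {α β : Type u} (G : SimpleGraph α) (H : SimpleGraph β) (a : α) (b : β) :
    (Join G H).Adj (Sum.inr b) (Sum.inl a) := by
  show True
  trivial

open Classical in
lemma isJoinGraph_iff_not_preconnected [Nontrivial W] (X : SimpleGraph W) :
    IsJoinGraph X ↔ ¬ Xᶜ.Preconnected := by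
  constructor
  · rintro ⟨α, β, G, H, ⟨a⟩, ⟨b⟩, ⟨e⟩⟩ hpc
    have e' : Xᶜ ≃g (Join G H)ᶜ := by
      refine ⟨e.toEquiv, ?_⟩
      intro x y
      simp only [compl_adj, ne_eq, EmbeddingLike.apply_eq_iff_eq]
      constructor
      · rintro ⟨hne, hna⟩
        exact ⟨hne, fun h => hna (e.map_adj_iff.mpr h)⟩
      · rintro ⟨hne, hna⟩
        exact ⟨hne, fun h => hna (e.map_adj_iff.mp h)⟩
    have adj_side : ∀ x y : α ⊕ β, (Join G H)ᶜ.Adj x y → x.isLeft = y.isLeft := by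
      rintro (x | x) (y | y) h
      · rfl
      · exact absurd (join_adj_inl_inr G H x y) h.2
      · exact absurd (join_adj_inr_inl G H y x) h.2
      · rfl
    have reach_side : ∀ x y : α ⊕ β, (Join G H)ᶜ.Reachable x y → x.isLeft = y.isLeft := by
      rintro x y ⟨p⟩
      induction p with
      | nil => rfl
      | cons h _ ih => exact (adj_side _ _ h).trans ih
    have h1 : Xᶜ.Reachable (e'.symm (Sum.inl a)) (e'.symm (Sum.inr b)) := hpc _ _
    have h2 : (Join G H)ᶜ.Reachable (Sum.inl a) (Sum.inr b) := by
      have := h1.map e'.toHom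
      simpa using this
    simpa using reach_side _ _ h2
  · intro h
    rw [Preconnected] at h
    push_neg at h
    obtain ⟨u, v, huv⟩ := h
    set S : Set W := {w | Xᶜ.Reachable u w} with hS
    have hu : u ∈ S := Reachable.refl u
    have hv : v ∈ Sᶜ := huv
    have hcross : ∀ x y : W, x ∈ S → y ∉ S → X.Adj x y := by
      intro x y hx hy
      have hne : x ≠ y := by rintro rfl; exact hy hx
      by_contra hadj
      exact hy (hx.trans (Adj.reachable ⟨hne, hadj⟩))
    let f : W → (↥S ⊕ ↥(Sᶜ)) := fun w => if h : w ∈ S then Sum.inl ⟨w, h⟩ else Sum.inr ⟨w, h⟩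
    let g : (↥S ⊕ ↥(Sᶜ)) → W := Sum.elim Subtype.val Subtype.val
    have hfg : Function.LeftInverse g f := by
      intro w
      by_cases h : w ∈ S <;> simp [f, g, h]
    have hgf : Function.RightInverse g f := by
      rintro (⟨w, hw⟩ | ⟨w, hw⟩)
      · simp [f, g, hw]
      · simp only [f, g, Sum.elim_inr]
        rw [dif_neg hw]
    refine ⟨↥S, ↥(Sᶜ), X.induce S, X.induce Sᶜ, ⟨⟨u, hu⟩⟩, ⟨⟨v, hv⟩⟩,
      ⟨⟨⟨f, g, hfg, hgf⟩, ?_⟩⟩⟩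
    intro x y
    show (Join _ _).Adj (f x) (f y) ↔ X.Adj x y
    by_cases hx : x ∈ S <;> by_cases hy : y ∈ S <;>
      simp only [f] <;>
      [rw [dif_pos hx, dif_pos hy]; rw [dif_pos hx, dif_neg hy];
       rw [dif_neg hx, dif_pos hy]; rw [dif_neg hx, dif_neg hy]]
    · exact Iff.rfl
    · exact iff_of_true (join_adj_inl_inr _ _ _ _) (hcross x y hx hy)
    · exact iff_of_true (join_adj_inr_inl _ _ _ _) ((hcross y x hy hx).symm)
    · exact Iff.rfl

lemma strong_compl_adj (G : SimpleGraph W) {n : ℕ} (x y : W × Fin n) :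
    (strongProd G (⊤ : SimpleGraph (Fin n)))ᶜ.Adj x y ↔ Gᶜ.Adj x.1 y.1 := by
  simp only [compl_adj]
  constructor
  · rintro ⟨hne, hnadj⟩
    have hc2 : x.2 = y.2 ∨ (⊤ : SimpleGraph (Fin n)).Adj x.2 y.2 := by
      rcases eq_or_ne x.2 y.2 with h | h
      · exact Or.inl h
      · exact Or.inr h
    constructor
    · intro h1
      exact hnadj ⟨hne, Or.inl h1, hc2⟩
    · intro h1
      exact hnadj ⟨hne, Or.inr h1, hc2⟩
  · rintro ⟨h1, h2⟩
    refine ⟨fun h => h1 (congrArg Prod.fst h), ?_⟩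
    rintro ⟨-, hc1, -⟩
    rcases hc1 with h | h
    · exact h1 h
    · exact h2 h

lemma strong_compl_preconnected_iff [Nontrivial W] (G : SimpleGraph W) {n : ℕ} (hn : 2 ≤ n) :
    (strongProd G (⊤ : SimpleGraph (Fin n)))ᶜ.Preconnected ↔ Gᶜ.Preconnected := by
  have hn0 : 0 < n := by omega
  let i0 : Fin n := ⟨0, hn0⟩
  constructor
  · intro h a b
    have hr := h (a, i0) (b, i0)
    exact hr.map ⟨Prod.fst, fun hadj => (strong_compl_adj G _ _).mp hadj⟩
  · intro h
    have lift : ∀ (a b : W) (p : Gᶜ.Walk a b) (i j : Fin n),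
        (strongProd G (⊤ : SimpleGraph (Fin n)))ᶜ.Reachable (a, i) (b, j) ∨ a = b := by
      intro a b p
      induction p with
      | nil => exact fun i j => Or.inr rfl
      | @cons a c b hac q ih =>
        intro i j
        left
        have step : (strongProd G (⊤ : SimpleGraph (Fin n)))ᶜ.Adj (a, i) (c, i) :=
          (strong_compl_adj G _ _).mpr hac
        rcases ih i j with hr | rfl
        · exact step.reachable.trans hr
        · exact ((strong_compl_adj G (a, i) (c, j)).mpr hac).reachable
    rintro ⟨a, i⟩ ⟨b, j⟩
    by_cases hab : a = b
    · subst hab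
      by_cases hij : i = j
      · subst hij; exact Reachable.refl _
      · obtain ⟨b', hb'⟩ := exists_ne a
        obtain ⟨p⟩ := h a b'
        have hnbr : ∃ c, Gᶜ.Adj a c := by
          cases p with
          | nil => exact absurd rfl hb'
          | cons hac q => exact ⟨_, hac⟩
        obtain ⟨c, hac⟩ := hnbr
        have s1 : (strongProd G (⊤ : SimpleGraph (Fin n)))ᶜ.Adj (a, i) (c, i) :=
          (strong_compl_adj G _ _).mpr hac
        have s2 : (strongProd G (⊤ : SimpleGraph (Fin n)))ᶜ.Adj (c, i) (a, j) :=
          (strong_compl_adj G _ _).mpr hac.symm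
        exact s1.reachable.trans s2.reachable
    · obtain ⟨p⟩ := h a b
      rcases lift a b p i j with hr | rfl
      · exact hr
      · exact absurd rfl hab

end AuxJoin

/-- For a graph `G` with at least two vertices and `n ≥ 2`, the strong
product `G ⊠ Kₙ` is a join graph iff `G` is a join graph. -/
theorem stmt_11 {W : Type u} [Nontrivial W] (G : SimpleGraph W) (n : ℕ) (hn : 2 ≤ n) :
    IsJoinGraph (strongProd G (⊤ : SimpleGraph (Fin n))) ↔ IsJoinGraph G := by
  haveI : NeZero n := ⟨by omega⟩
  haveI : Nontrivial (W × Fin n) := inferInstance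
  rw [isJoinGraph_iff_not_preconnected, isJoinGraph_iff_not_preconnected,
    strong_compl_preconnected_iff G hn]
end

section
/- For a connected simple graph G, the following statements are equivalent: (i) every independent set of G is a mutual-visibility set; (ii) G contains no set of vertices that is both independent and a strong critical set. -/
open SimpleGraph

universe u

variable {V : Type*}

/-- `S` is a strong critical set: for some vertices `u, v ∉ S`, no vertex of `S` is adjacent
to `u` or `v`, yet deleting `S` strictly increases the distance between `u` and `v`
(as an extended natural number, so disconnection counts). -/
def IsStrongCriticalSet (G : SimpleGraph V) (S : Set V) : Prop :=
  ∃ (u v : V) (hu : u ∈ (Sᶜ : Set V)) (hv : v ∈ (Sᶜ : Set V)),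
    G.edist u v < (G.induce (Sᶜ : Set V)).edist ⟨u, hu⟩ ⟨v, hv⟩ ∧
    ∀ s ∈ S, ¬ G.Adj s u ∧ ¬ G.Adj s v

/-- A walk whose support lies in `s` can be lifted to the induced subgraph on `s`. -/
lemma walk_to_induce {G : SimpleGraph V} {s : Set V} :
    ∀ {u v : V} (p : G.Walk u v), (∀ w ∈ p.support, w ∈ s) →
    ∀ (hu : u ∈ s) (hv : v ∈ s),
    ∃ q : (G.induce s).Walk ⟨u, hu⟩ ⟨v, hv⟩, q.length = p.length := by
  intro u v p
  induction p with
  | nil => intro _ hu hv; exact ⟨SimpleGraph.Walk.nil, rfl⟩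
  | @cons a b c hab p ih =>
    intro hsup ha hc
    have hb : b ∈ s := hsup b (by simp)
    obtain ⟨q, hq⟩ := ih (fun w hw => hsup w (by simp [hw])) hb hc
    exact ⟨SimpleGraph.Walk.cons (by exact hab) q, by change q.length + 1 = p.length + 1; rw [hq]⟩

/-- In a connected graph, every independent set is an MV set iff the graph
contains no independent strong critical set. -/
theorem stmt_12 (G : SimpleGraph V) (hG : G.Connected) :
    (∀ X : Set V, IsIndependentSet G X → IsMVSet G X) ↔
      ¬ ∃ S : Set V, IsIndependentSet G S ∧ IsStrongCriticalSet G S := by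
  constructor
  · rintro h ⟨S, hSind, u, v, hu, hv, hcrit, hadj⟩
    -- u and v are not adjacent
    have huv : ¬ G.Adj u v := by
      intro hA
      have h1 : (G.induce (Sᶜ : Set V)).Adj ⟨u, hu⟩ ⟨v, hv⟩ := hA
      have h2 : (G.induce (Sᶜ : Set V)).edist ⟨u, hu⟩ ⟨v, hv⟩ = 1 :=
        (SimpleGraph.edist_eq_one_iff_adj).mpr h1
      have h3 : G.edist u v = 1 := (SimpleGraph.edist_eq_one_iff_adj).mpr hA
      rw [h2, h3] at hcrit
      exact lt_irrefl _ hcrit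
    have hune : u ≠ v := by
      rintro rfl
      simp [SimpleGraph.edist_self] at hcrit
    -- X := S ∪ {u, v} is independent
    set X : Set V := S ∪ {u, v} with hX
    have hXind : IsIndependentSet G X := by
      rintro a ha b hb hab
      rcases ha with ha | ha
      · rcases hb with hb | hb
        · exact hSind a ha b hb hab
        · rcases hb with rfl | rfl
          · exact (hadj a ha).1 hab
          · exact (hadj a ha).2 hab
      · rcases hb with hb | hb
        · rcases ha with rfl | rfl
          · exact (hadj b hb).1 hab.symm
          · exact (hadj b hb).2 hab.symm
        · rcases ha with rfl | rfl <;> rcases hb with rfl | rfl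
          · exact G.loopless.irrefl _ hab
          · exact huv hab
          · exact huv hab.symm
          · exact G.loopless.irrefl _ hab
    have hvis := h X hXind u (by right; left; rfl) v (by right; right; rfl)
    obtain ⟨p, hplen, hpsup⟩ := hvis
    -- support of p avoids S
    have hsub : ∀ w ∈ p.support, w ∈ (Sᶜ : Set V) := by
      intro w hw hwS
      rcases hpsup w hw (Or.inl hwS) with rfl | rfl
      · exact hu hwS
      · exact hv hwS
    obtain ⟨q, hqlen⟩ := walk_to_induce p hsub hu hv
    have h1 : (G.induce (Sᶜ : Set V)).edist ⟨u, hu⟩ ⟨v, hv⟩ ≤ q.length :=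
      SimpleGraph.edist_le q
    have h2 : (G.edist u v : ℕ∞) = (G.dist u v : ℕ∞) := by
      rw [SimpleGraph.dist]
      exact (ENat.coe_toNat (by
        rw [SimpleGraph.edist_ne_top_iff_reachable]; exact hG u v)).symm
    rw [hqlen, hplen, ← h2] at h1
    exact absurd hcrit (not_lt.mpr h1)
  · intro h X hXind u hu v hv
    set S : Set V := X \ {u, v} with hS
    have hSind : IsIndependentSet G S := fun a ha b hb =>
      hXind a ha.1 b hb.1
    have huS : u ∈ (Sᶜ : Set V) := fun h' => h'.2 (by simp)
    have hvS : v ∈ (Sᶜ : Set V) := fun h' => h'.2 (by simp)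
    have hadj : ∀ s ∈ S, ¬ G.Adj s u ∧ ¬ G.Adj s v := fun s hs =>
      ⟨hXind s hs.1 u hu, hXind s hs.1 v hv⟩
    have hnotcrit : ¬ (G.edist u v < (G.induce (Sᶜ : Set V)).edist ⟨u, huS⟩ ⟨v, hvS⟩) := by
      intro hlt
      exact h ⟨S, hSind, u, v, huS, hvS, hlt, hadj⟩
    push_neg at hnotcrit
    have htop : (G.induce (Sᶜ : Set V)).edist ⟨u, huS⟩ ⟨v, hvS⟩ ≠ ⊤ := by
      intro heq
      rw [heq] at hnotcrit
      exact SimpleGraph.edist_ne_top_iff_reachable.mpr (hG u v) (top_le_iff.mp hnotcrit)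
    obtain ⟨q, hqlen⟩ := SimpleGraph.exists_walk_of_edist_ne_top htop
    -- map q back to G
    let p : G.Walk u v := q.map (SimpleGraph.Embedding.induce (Sᶜ : Set V)).toHom
    have hplen : p.length = q.length := SimpleGraph.Walk.length_map _ _
    have h2 : (G.edist u v : ℕ∞) = (G.dist u v : ℕ∞) := by
      rw [SimpleGraph.dist]
      exact (ENat.coe_toNat (by
        rw [SimpleGraph.edist_ne_top_iff_reachable]; exact hG u v)).symm
    have hle : (p.length : ℕ∞) ≤ (G.dist u v : ℕ∞) := by
      rw [hplen, hqlen, ← h2]; exact hnotcrit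
    have hge : G.dist u v ≤ p.length := SimpleGraph.dist_le p
    have hlen : p.length = G.dist u v := le_antisymm (by exact_mod_cast hle) hge
    refine ⟨p, hlen, ?_⟩
    intro w hw hwX
    rw [show p.support = _ from SimpleGraph.Walk.support_map _ _] at hw
    obtain ⟨x, _, rfl⟩ := List.mem_map.mp hw
    have hxS : (x : V) ∉ S := x.2
    by_contra hne
    push_neg at hne
    exact hxS ⟨hwX, by simp; exact ⟨hne.1, hne.2⟩⟩
end

section
/- Let G be a connected simple graph with diameter exactly 4. Then every independent set of G is a mutual-visibility set if and only if for every pair of vertices u, v with d_G(u,v) = 4, the set I_2[u,v] of vertices that lie on some shortest u,v-path at distance 2 from u induces at least one edge of G. -/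
open SimpleGraph

universe u

variable {V : Type*}

/-- The interval `I_G[u,v]`: vertices lying on some shortest `u,v`-path. -/
def IntervalSet (G : SimpleGraph V) (u v : V) : Set V :=
  {w : V | ∃ p : G.Walk u v, p.length = G.dist u v ∧ w ∈ p.support}

/-- `I_2[u,v]`: vertices on some shortest `u,v`-path at distance `2` from `u`. -/
def I2 (G : SimpleGraph V) (u v : V) : Set V :=
  {w ∈ IntervalSet G u v | G.dist u w = 2}

private lemma edist_getVert_le {G : SimpleGraph V} {u v : V} (p : G.Walk u v) (i : ℕ) :
    G.edist u (p.getVert i) ≤ i := by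
  induction p generalizing i with
  | nil => simp [Walk.getVert]
  | @cons a b c h q ih =>
    cases i with
    | zero => simp
    | succ n =>
      rw [Walk.getVert_cons_succ]
      calc G.edist a (q.getVert n) ≤ G.edist a b + G.edist b (q.getVert n) :=
            SimpleGraph.edist_triangle
        _ ≤ 1 + (n : ℕ∞) := add_le_add (by simpa using SimpleGraph.edist_le h.toWalk) (ih n)
        _ = ((n + 1 : ℕ) : ℕ∞) := by push_cast; ring

private lemma edist_getVert_le' {G : SimpleGraph V} {u v : V} (p : G.Walk u v) (i : ℕ) :
    G.edist (p.getVert i) v ≤ (p.length - i : ℕ) := by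
  induction p generalizing i with
  | nil => simp [Walk.getVert]
  | @cons a b c h q ih =>
    cases i with
    | zero =>
      rw [Walk.getVert_zero]
      simpa using SimpleGraph.edist_le (Walk.cons h q)
    | succ n =>
      rw [Walk.getVert_cons_succ]
      simpa [Nat.succ_sub_succ] using ih n

private lemma dist_getVert_eq {G : SimpleGraph V} (hG : G.Connected) {u v : V}
    (p : G.Walk u v) (hp : p.length = G.dist u v) {i : ℕ} (hi : i ≤ p.length) :
    G.dist u (p.getVert i) = i ∧ G.dist (p.getVert i) v = p.length - i := by
  have h1 : G.dist u (p.getVert i) ≤ i :=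
    ENat.toNat_le_of_le_coe (edist_getVert_le p i)
  have h2 : G.dist (p.getVert i) v ≤ p.length - i :=
    ENat.toNat_le_of_le_coe (edist_getVert_le' p i)
  have h3 : G.dist u v ≤ G.dist u (p.getVert i) + G.dist (p.getVert i) v :=
    hG.dist_triangle
  omega

/-- In a connected graph of diameter exactly `4`, every independent set is an
MV set iff for every pair `u, v` at distance `4`, the set `I_2[u,v]` induces an edge. -/
theorem stmt_13 (G : SimpleGraph V) (hG : G.Connected) (hdiam : G.ediam = 4) :
    (∀ X : Set V, IsIndependentSet G X → IsMVSet G X) ↔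
      (∀ u v : V, G.dist u v = 4 → ∃ a ∈ I2 G u v, ∃ b ∈ I2 G u v, G.Adj a b) := by
  have hd4 : ∀ u v : V, G.dist u v ≤ 4 := by
    intro u v
    have h1 : G.edist u v ≤ (4 : ℕ) := by
      rw [show ((4 : ℕ) : ℕ∞) = (4 : ℕ∞) by rfl, ← hdiam]
      exact G.edist_le_ediam
    exact ENat.toNat_le_of_le_coe h1
  -- distance/interval facts about members of I2
  have hI2 : ∀ u v : V, G.dist u v = 4 → ∀ w ∈ I2 G u v,
      G.dist u w = 2 ∧ G.dist w v = 2 := by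
    rintro u v huv w ⟨⟨p, hp, hw⟩, hw2⟩
    obtain ⟨i, hgi, hile⟩ := Walk.mem_support_iff_exists_getVert.mp hw
    have hdg := dist_getVert_eq hG p hp hile
    rw [hgi] at hdg
    refine ⟨hw2, ?_⟩
    omega
  constructor
  · -- every independent set MV → I2 induces an edge
    intro H u v huv
    by_contra hne
    push_neg at hne
    set X : Set V := {u, v} ∪ I2 G u v with hXdef
    have huX : u ∈ X := Or.inl (Or.inl rfl)
    have hvX : v ∈ X := Or.inl (Or.inr rfl)
    have hind : IsIndependentSet G X := by
      rintro x hx y hy hadj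
      have hfact : ∀ z ∈ I2 G u v, ¬ G.Adj u z ∧ ¬ G.Adj z v := by
        intro z hz
        obtain ⟨h1, h2⟩ := hI2 u v huv z hz
        constructor
        · intro ha; rw [← dist_eq_one_iff_adj] at ha; omega
        · intro ha; rw [← dist_eq_one_iff_adj] at ha; omega
      rcases hx with (rfl | rfl) | hx <;> rcases hy with (rfl | rfl) | hy
      · exact G.irrefl hadj
      · rw [← dist_eq_one_iff_adj] at hadj; omega
      · exact (hfact y hy).1 hadj
      · rw [← dist_eq_one_iff_adj] at hadj
        rw [SimpleGraph.dist_comm] at hadj; omega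
      · exact G.irrefl hadj
      · exact (hfact y hy).2 hadj.symm
      · exact (hfact x hx).1 hadj.symm
      · exact (hfact x hx).2 hadj
      · exact hne x hx y hy hadj
    obtain ⟨p, hp, hvis⟩ := H X hind u huX v hvX
    have hlen : p.length = 4 := by rw [hp, huv]
    have hm : ∃ m, m = p.getVert 2 := ⟨_, rfl⟩
    obtain ⟨m, hm⟩ := hm
    have hmem : m ∈ p.support :=
      Walk.mem_support_iff_exists_getVert.mpr ⟨2, hm.symm, by omega⟩
    have hdm := dist_getVert_eq hG p hp (i := 2) (by omega)
    rw [← hm] at hdm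
    have hmI2 : m ∈ I2 G u v := ⟨⟨p, hp, hmem⟩, hdm.1⟩
    have hmX : m ∈ X := Or.inr hmI2
    rcases hvis m hmem hmX with rfl | rfl
    · have := hdm.1; rw [SimpleGraph.dist_self] at this; omega
    · have := hdm.2; rw [SimpleGraph.dist_self] at this; omega
  · -- I2 induces an edge → every independent set MV
    intro H X hX s hs t ht
    by_cases h0 : G.dist s t = 0
    · have hst : s = t := (hG.dist_eq_zero_iff).mp h0
      subst hst
      exact ⟨Walk.nil, by rw [Walk.length_nil, SimpleGraph.dist_self], by simp⟩
    have hd : G.dist s t ≤ 4 := hd4 s t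
    -- general checker given a shortest walk whose distance-2 vertex (if any) avoids X
    by_cases hd4' : G.dist s t = 4
    · -- distance 4 case
      obtain ⟨a, ha, b, hb, hab⟩ := H s t hd4'
      have hc : ∃ c ∈ I2 G s t, c ∉ X := by
        by_cases haX : a ∈ X
        · refine ⟨b, hb, fun hbX => hX a haX b hbX hab⟩
        · exact ⟨a, ha, haX⟩
      obtain ⟨c, hcI2, hcX⟩ := hc
      obtain ⟨⟨q, hq, hcq⟩, hc2⟩ := hcI2
      have hqlen : q.length = 4 := by rw [hq, hd4']
      refine ⟨q, hq, ?_⟩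
      intro w hw hwX
      obtain ⟨i, hgi, hile⟩ := Walk.mem_support_iff_exists_getVert.mp hw
      have hdg := dist_getVert_eq hG q hq hile
      rw [hgi] at hdg
      rcases hdg with ⟨hdw1, hdw2⟩
      have hile4 : i ≤ 4 := by omega
      clear hile
      interval_cases i
      · left; rw [← hgi, Walk.getVert_zero]
      · exfalso
        have : G.Adj s w := dist_eq_one_iff_adj.mp hdw1
        exact hX s hs w hwX this
      · -- w is the unique distance-2 vertex, which equals c ∉ X
        exfalso
        obtain ⟨j, hgj, hjle⟩ := Walk.mem_support_iff_exists_getVert.mp hcq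
        have hdgc := dist_getVert_eq hG q hq hjle
        rw [hgj] at hdgc
        have hj2 : j = 2 := by omega
        subst hj2
        rw [hgi] at hgj
        exact hcX (hgj ▸ hwX)
      · exfalso
        have : G.Adj w t := dist_eq_one_iff_adj.mp (by omega : G.dist w t = 1)
        exact hX w hwX t ht this
      · right
        rw [← hgi]
        have : q.getVert 4 = t := by
          rw [← hqlen]; exact q.getVert_length
        rw [this]
    · -- distance ≤ 3 case
      obtain ⟨p, hp⟩ := hG.exists_walk_length_eq_dist s t
      refine ⟨p, hp, ?_⟩
      intro w hw hwX
      obtain ⟨i, hgi, hile⟩ := Walk.mem_support_iff_exists_getVert.mp hw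
      have hdg := dist_getVert_eq hG p hp hile
      rw [hgi] at hdg
      rcases hdg with ⟨hdw1, hdw2⟩
      rcases Nat.eq_zero_or_pos i with rfl | hi0
      · left; rw [← hgi, Walk.getVert_zero]
      rcases eq_or_lt_of_le hile with heq | hlt
      · right
        rw [← hgi, heq]
        exact p.getVert_length
      have hplen : p.length ≤ 3 := by omega
      exfalso
      have h1or : G.dist s w = 1 ∨ G.dist w t = 1 := by omega
      rcases h1or with h1 | h1
      · exact hX s hs w hwX (dist_eq_one_iff_adj.mp h1)
      · exact hX w hwX t ht (dist_eq_one_iff_adj.mp h1)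
end

section
/- If n ≥ 2 and G is a connected simple graph, then every independent set of the strong product G ⊠ K_n is a total mutual-visibility set of G ⊠ K_n. -/
open SimpleGraph

universe u

variable {V : Type*}

-- Auxiliary: projection lower bound for distances in a strong product.
lemma strongProd_proj_dist_le {β : Type*} (G : SimpleGraph V) (hG : G.Connected)
    (H : SimpleGraph β) {a b : V × β} (p : (strongProd G H).Walk a b) :
    G.dist a.1 b.1 ≤ p.length := by
  induction p with
  | nil => simp
  | cons h q ih =>
    rename_i x y z
    have h1 : G.dist x.1 y.1 ≤ 1 := by
      rcases h.2.1 with he | ha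
      · rw [he, dist_self]; omega
      · exact (dist_eq_one_iff_adj.mpr ha).le
    calc G.dist x.1 z.1 ≤ G.dist x.1 y.1 + G.dist y.1 z.1 := hG.dist_triangle
    _ ≤ 1 + q.length := by omega
    _ = (SimpleGraph.Walk.cons h q).length := by simp [Walk.length_cons]; omega

-- Auxiliary: lifting a walk of `G` to the strong product avoiding `X` in the interior.
lemma strongProd_lift_walk (G : SimpleGraph V) (n : ℕ) (X : Set (V × Fin n))
    (hpick : ∀ g : V, ∃ c : Fin n, (g, c) ∉ X) :
    ∀ {x y : V} (p : G.Walk x y), p.length ≠ 0 → ∀ a b : Fin n,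
      ∃ q : (strongProd G (⊤ : SimpleGraph (Fin n))).Walk (x, a) (y, b),
        q.length = p.length ∧ ∀ w ∈ q.support, w ∈ X → w = (x, a) ∨ w = (y, b) := by
  intro x y p
  induction p with
  | nil => intro h; simp at h
  | cons h r ih =>
    rename_i x z y
    intro _ a b
    have hadjgen : ∀ (g g' : V) (c c' : Fin n), G.Adj g g' →
        (strongProd G (⊤ : SimpleGraph (Fin n))).Adj (g, c) (g', c') := by
      intro g g' c c' hgg
      refine ⟨fun he => hgg.ne (congrArg Prod.fst he), Or.inr hgg, ?_⟩
      by_cases hcc : c = c'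
      · exact Or.inl hcc
      · exact Or.inr (by simpa [SimpleGraph.top_adj] using hcc)
    cases r with
    | nil =>
      refine ⟨Walk.cons (hadjgen x z a b h) Walk.nil, by simp, ?_⟩
      intro w hw _
      simp [Walk.support_cons] at hw
      tauto
    | cons h2 r2 =>
      obtain ⟨c, hc⟩ := hpick z
      obtain ⟨q', hq'len, hq'X⟩ := ih (by simp) c b
      refine ⟨Walk.cons (hadjgen x z a c h) q', by simp [hq'len], ?_⟩
      intro w hw hwX
      rcases (by simpa [Walk.support_cons] using hw : w = (x, a) ∨ w ∈ q'.support) with h1 | h1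
      · exact Or.inl h1
      · rcases hq'X w h1 hwX with h2 | h2
        · exact absurd (h2 ▸ hwX) hc
        · exact Or.inr h2

/-- For `n ≥ 2` and a connected graph `G`, every independent set of the
strong product `G ⊠ Kₙ` is a total MV set of `G ⊠ Kₙ`. -/
theorem stmt_14 (G : SimpleGraph V) (hG : G.Connected) (n : ℕ) (hn : 2 ≤ n) :
    ∀ X : Set (V × Fin n), IsIndependentSet (strongProd G (⊤ : SimpleGraph (Fin n))) X →
      IsTotalMVSet (strongProd G (⊤ : SimpleGraph (Fin n))) X := by
  intro X hX u v
  -- at most one vertex of `X` in each column, so a free second coordinate exists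
  have hpick : ∀ g : V, ∃ c : Fin n, (g, c) ∉ X := by
    intro g
    by_contra hcon
    push_neg at hcon
    have h01 : (⟨0, by omega⟩ : Fin n) ≠ (⟨1, by omega⟩ : Fin n) := by
      intro he; simpa using congrArg Fin.val he
    have hadj : (strongProd G (⊤ : SimpleGraph (Fin n))).Adj (g, ⟨0, by omega⟩) (g, ⟨1, by omega⟩) :=
      ⟨fun he => h01 (congrArg Prod.snd he), Or.inl rfl,
        Or.inr (by simpa [SimpleGraph.top_adj] using h01)⟩
    exact hX _ (hcon _) _ (hcon _) hadj
  by_cases huv : u = v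
  · subst huv
    exact ⟨Walk.nil, by simp [SimpleGraph.dist_self], fun w hw _ => Or.inl (by simpa using hw)⟩
  by_cases hfst : u.1 = v.1
  · have hsnd : u.2 ≠ v.2 := fun h => huv (Prod.ext hfst h)
    have hadj : (strongProd G (⊤ : SimpleGraph (Fin n))).Adj u v :=
      ⟨huv, Or.inl hfst, Or.inr (by simpa [SimpleGraph.top_adj] using hsnd)⟩
    refine ⟨Walk.cons hadj Walk.nil, ?_, ?_⟩
    · simp [dist_eq_one_iff_adj.mpr hadj]
    · intro w hw _
      simp [Walk.support_cons] at hw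
      tauto
  · obtain ⟨u1, u2⟩ := u
    obtain ⟨v1, v2⟩ := v
    simp only at hfst
    obtain ⟨p, hp⟩ := hG.exists_walk_length_eq_dist u1 v1
    have hdpos : G.dist u1 v1 ≠ 0 := by
      rw [dist_ne_zero_iff_ne_and_reachable]
      exact ⟨hfst, hG.preconnected u1 v1⟩
    obtain ⟨q, hqlen, hqX⟩ := strongProd_lift_walk G n X hpick p (hp ▸ hdpos) u2 v2
    have hle : (strongProd G (⊤ : SimpleGraph (Fin n))).dist (u1, u2) (v1, v2) ≤
        G.dist u1 v1 := by
      have := dist_le q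
      omega
    have hge : G.dist u1 v1 ≤ (strongProd G (⊤ : SimpleGraph (Fin n))).dist (u1, u2) (v1, v2) := by
      have hr : (strongProd G (⊤ : SimpleGraph (Fin n))).Reachable (u1, u2) (v1, v2) := ⟨q⟩
      obtain ⟨w, hw⟩ := hr.exists_walk_length_eq_dist
      have h2 : G.dist u1 v1 ≤ w.length := strongProd_proj_dist_le G hG _ w
      omega
    refine ⟨q, by omega, ?_⟩
    exact hqX
end

section
/- For a connected simple graph G, the following statements are equivalent: (i) for every set X ⊆ V(G), X is a total mutual-visibility set of G if and only if X is independent; (ii) G is a dense diamond graph and every edge of G is the middle edge of a convex diamond. -/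
open SimpleGraph

universe u

variable {V : Type*}

section Aux

open Classical in
/-- If a shortest walk has no internal `X`-vertex, the endpoints are visible. -/
lemma visible_of_count_zero (G : SimpleGraph V) (X : Set V) {u v : V} (p : G.Walk u v)
    (hlen : p.length = G.dist u v)
    (h0 : p.support.countP (fun z => decide (z ∈ X ∧ z ≠ u ∧ z ≠ v)) = 0) :
    Visible G X u v := by
  refine ⟨p, hlen, ?_⟩
  intro w hw hwX
  by_contra hcon
  push_neg at hcon
  have := List.countP_eq_zero.mp h0 w hw
  simp only [decide_eq_true_eq] at this
  exact this ⟨hwX, hcon.1, hcon.2⟩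

open Classical in
/-- Key replacement lemma: if every pair at distance two has a common neighbor
outside `X`, then internal `X`-vertices of shortest walks can be eliminated. -/
lemma visible_aux (G : SimpleGraph V) (X : Set V)
    (hrepl : ∀ a b : V, G.dist a b = 2 → ∃ c, c ∉ X ∧ G.Adj a c ∧ G.Adj c b) :
    ∀ (n : ℕ) (u v : V) (p : G.Walk u v), p.length = G.dist u v →
      p.support.countP (fun z => decide (z ∈ X ∧ z ≠ u ∧ z ≠ v)) ≤ n →
      Visible G X u v := by
  intro n
  induction n with
  | zero =>
    intro u v p hlen hc
    exact visible_of_count_zero G X p hlen (Nat.le_zero.mp hc)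
  | succ n ih =>
    intro u v p hlen hc
    by_cases h0 : p.support.countP (fun z => decide (z ∈ X ∧ z ≠ u ∧ z ≠ v)) = 0
    · exact visible_of_count_zero G X p hlen h0
    have hpos := Nat.pos_of_ne_zero h0
    obtain ⟨w, hw, hfw⟩ := List.countP_pos_iff.mp hpos
    have hfw' := hfw
    simp only [decide_eq_true_eq] at hfw'
    obtain ⟨hwX, hwu, hwv⟩ := hfw'
    have hspec := p.take_spec hw
    obtain ⟨a, hwa, s, hs⟩ := Walk.exists_eq_cons_of_ne hwu (p.takeUntil w hw).reverse
    obtain ⟨b, hwb, r, hr⟩ := Walk.exists_eq_cons_of_ne hwv (p.dropUntil w hw)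
    have hq1 : p.takeUntil w hw = (Walk.cons hwa s).reverse := by
      rw [← hs, Walk.reverse_reverse]
    have hlen1 : (p.takeUntil w hw).length = s.length + 1 := by
      rw [hq1, Walk.length_reverse, Walk.length_cons]
    have hlen2 : (p.dropUntil w hw).length = r.length + 1 := by
      rw [hr, Walk.length_cons]
    have hplen : p.length = (p.takeUntil w hw).length + (p.dropUntil w hw).length := by
      conv_lhs => rw [← hspec]
      rw [Walk.length_append]
    -- a and b are at distance 2
    have hreach : G.Reachable a b := ⟨Walk.cons hwa.symm (Walk.cons hwb Walk.nil)⟩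
    obtain ⟨t, ht⟩ := hreach.exists_walk_length_eq_dist
    have hab2 : G.dist a b ≤ 2 := by
      have := SimpleGraph.dist_le (Walk.cons hwa.symm (Walk.cons hwb Walk.nil))
      simpa using this
    have hdl := SimpleGraph.dist_le (s.reverse.append (t.append r))
    have hdl' : (s.reverse.append (t.append r)).length = s.length + (t.length + r.length) := by
      rw [Walk.length_append, Walk.length_append, Walk.length_reverse]
    have hdist : G.dist a b = 2 := by
      rw [hdl'] at hdl
      omega
    obtain ⟨c, hcX, hac, hcb⟩ := hrepl a b hdist
    set p' : G.Walk u v := s.reverse.append (Walk.cons hac (Walk.cons hcb r)) with hp'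
    have hp'len : p'.length = G.dist u v := by
      have : p'.length = s.length + (r.length + 2) := by
        rw [hp', Walk.length_append, Walk.length_reverse, Walk.length_cons, Walk.length_cons]
      omega
    have hsup : p.support = s.support.reverse ++ w :: r.support := by
      conv_lhs => rw [← hspec]
      rw [Walk.support_append, hq1, hr, Walk.support_reverse, Walk.support_cons,
        Walk.support_cons, List.reverse_cons, List.tail_cons, List.append_assoc,
        List.singleton_append]
    have hsup' : p'.support = s.support.reverse ++ c :: r.support := by
      rw [hp', Walk.support_append, Walk.support_reverse, Walk.support_cons,
        Walk.support_cons, List.tail_cons]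
    have hcX' : (fun z => decide (z ∈ X ∧ z ≠ u ∧ z ≠ v)) c = false := by
      simp [hcX]
    have hcount : p'.support.countP (fun z => decide (z ∈ X ∧ z ≠ u ∧ z ≠ v)) + 1 =
        p.support.countP (fun z => decide (z ∈ X ∧ z ≠ u ∧ z ≠ v)) := by
      rw [hsup, hsup', List.countP_append, List.countP_append, List.countP_cons,
        List.countP_cons, hfw]
      simp [hcX]
      omega
    exact ih u v p' hp'len (by omega)

/-- Totality from the replacement property. -/
lemma totalMV_of_repl (G : SimpleGraph V) (hG : G.Connected) (X : Set V)
    (hrepl : ∀ a b : V, G.dist a b = 2 → ∃ c, c ∉ X ∧ G.Adj a c ∧ G.Adj c b) :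
    IsTotalMVSet G X := by
  classical
  intro u v
  obtain ⟨p, hp⟩ := hG.exists_walk_length_eq_dist u v
  exact visible_aux G X hrepl _ u v p hp le_rfl

/-- The middle vertex of a length-2 walk. -/
lemma middle_vertex {G : SimpleGraph V} {u v : V} (p : G.Walk u v) (h : p.length = 2) :
    G.Adj u (p.getVert 1) ∧ G.Adj (p.getVert 1) v ∧ p.getVert 1 ∈ p.support := by
  have h01 : G.Adj (p.getVert 0) (p.getVert 1) := p.adj_getVert_succ (by omega)
  have h12 : G.Adj (p.getVert 1) (p.getVert 2) := p.adj_getVert_succ (by omega)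
  have hv : p.getVert 2 = v := by
    have := p.getVert_length
    rwa [h] at this
  rw [p.getVert_zero] at h01
  rw [hv] at h12
  exact ⟨h01, h12, Walk.mem_support_iff_exists_getVert.mpr ⟨1, rfl, by omega⟩⟩

end Aux

/-- In a connected graph, the total MV sets are exactly the independent sets
iff the graph is a dense diamond graph and every edge is the middle edge of a convex
diamond. -/
theorem stmt_15 (G : SimpleGraph V) (hG : G.Connected) :
    (∀ X : Set V, IsTotalMVSet G X ↔ IsIndependentSet G X) ↔
      (DenseDiamond G ∧ ∀ u v : V, G.Adj u v → IsMiddleEdgeOfConvexDiamond G u v) := by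
  constructor
  · intro h
    have hdense : DenseDiamond G := by
      refine ⟨hG, ?_⟩
      intro u v huv
      by_contra hnd
      have huv_ne : u ≠ v := by
        rintro rfl
        rw [SimpleGraph.dist_self] at huv
        omega
      set X : Set V := {z | G.Adj u z ∧ G.Adj z v} with hXdef
      have hind : IsIndependentSet G X := by
        intro a ha b hb hab
        exact hnd ⟨a, b, hab.ne, huv_ne, hab, ha.1, hb.1, ha.2.symm, hb.2.symm⟩
      have hX : IsTotalMVSet G X := (h X).mpr hind
      obtain ⟨p, hplen, hpsup⟩ := hX u v
      rw [huv] at hplen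
      obtain ⟨h01, h12, hmem⟩ := middle_vertex p hplen
      rcases hpsup _ hmem ⟨h01, h12⟩ with hz | hz
      · rw [hz] at h01; exact G.loopless.irrefl u h01
      · rw [hz] at h12; exact G.loopless.irrefl v h12
    refine ⟨hdense, ?_⟩
    intro u v huv
    by_contra hmid
    rw [IsMiddleEdgeOfConvexDiamond] at hmid
    push_neg at hmid
    have hX : IsTotalMVSet G ({u, v} : Set V) := by
      apply totalMV_of_repl G hG
      intro a b hab
      obtain ⟨c, d, hcd, hab', hcdadj, hac, had, hbc, hbd⟩ := hdense.2 a b hab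
      by_cases hcu : c ∈ ({u, v} : Set V)
      · by_cases hdu : d ∈ ({u, v} : Set V)
        · have hadj4 : G.Adj a u ∧ G.Adj a v ∧ G.Adj b u ∧ G.Adj b v := by
            rcases hcu with rfl | rfl <;> rcases hdu with rfl | rfl <;>
              first
                | exact absurd rfl hcd
                | exact ⟨by assumption, by assumption, by assumption, by assumption⟩
          have hab_nadj : ¬ G.Adj a b := by
            intro h'
            have := SimpleGraph.dist_eq_one_iff_adj.mpr h'
            omega
          obtain ⟨z, haz, hzb, hzu, hzv⟩ :=
            hmid a b hab' hab_nadj huv hadj4.1 hadj4.2.1 hadj4.2.2.1 hadj4.2.2.2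
          refine ⟨z, ?_, haz, hzb⟩
          simp [hzu, hzv]
        · exact ⟨d, hdu, had, hbd.symm⟩
      · exact ⟨c, hcu, hac, hbc.symm⟩
    have hind := (h _).mp hX
    exact hind u (by simp) v (by simp) huv
  · rintro ⟨⟨-, hdd⟩, hme⟩ X
    constructor
    · intro hX u huX v hvX hadj
      obtain ⟨w, x, hwx, hnadj, -, hwu, hwv, hxu, hxv, hconv⟩ := hme u v hadj
      have h2 : G.dist w x = 2 := by
        have hle : G.dist w x ≤ 2 := by
          have := SimpleGraph.dist_le (Walk.cons hwu (Walk.cons hxu.symm Walk.nil))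
          simpa using this
        have hne : G.dist w x ≠ 0 := by
          intro h0
          exact hwx (hG.dist_eq_zero_iff.mp h0)
        have h1 : G.dist w x ≠ 1 := fun h1 => hnadj (SimpleGraph.dist_eq_one_iff_adj.mp h1)
        omega
      obtain ⟨p, hplen, hpsup⟩ := hX w x
      rw [h2] at hplen
      obtain ⟨h01, h12, hmem⟩ := middle_vertex p hplen
      have hz : p.getVert 1 ∈ X := by
        rcases hconv _ h01 h12 with rfl | rfl
        · exact huX
        · exact hvX
      rcases hpsup _ hmem hz with hz' | hz'
      · rw [hz'] at h01; exact G.loopless.irrefl w h01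
      · rw [hz'] at h12; exact G.loopless.irrefl x h12
    · intro hind
      apply totalMV_of_repl G hG
      intro a b hab
      obtain ⟨c, d, hcd, hab', hcdadj, hac, had, hbc, hbd⟩ := hdd a b hab
      by_cases hcX : c ∈ X
      · by_cases hdX : d ∈ X
        · exact absurd hcdadj (hind c hcX d hdX)
        · exact ⟨d, hdX, had, hbd.symm⟩
      · exact ⟨c, hcX, hac, hbc.symm⟩
end

section
/- If n ≥ 2 and G is a connected simple graph with at least one vertex, then the strong product G ⊠ K_n is a dense diamond graph. -/
open SimpleGraph

universe u

variable {V : Type*}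

/-- For `n ≥ 2` and a connected nonempty graph `G`, the strong product
`G ⊠ Kₙ` is a dense diamond graph. -/
theorem stmt_16 [Nonempty V] (G : SimpleGraph V) (hG : G.Connected) (n : ℕ) (hn : 2 ≤ n) :
    DenseDiamond (strongProd G (⊤ : SimpleGraph (Fin n))) := by
  have npos : 0 < n := by omega
  set H := strongProd G (⊤ : SimpleGraph (Fin n)) with hH
  have topAdj : ∀ i j : Fin n, i = j ∨ (⊤ : SimpleGraph (Fin n)).Adj i j := by
    intro i j
    by_cases h : i = j
    · exact Or.inl h
    · exact Or.inr (by simpa using h)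
  have key : ∀ (a b : V) (p : G.Walk a b) (i : Fin n), H.Reachable (a, i) (b, i) := by
    intro a b p i
    induction p with
    | nil => exact Reachable.refl _
    | cons h q ih =>
      refine (Adj.reachable ?_).trans ih
      exact ⟨by simp [h.ne], Or.inr h, Or.inl rfl⟩
  have hconn : H.Connected := by
    haveI : Nonempty (V × Fin n) := ⟨(Classical.arbitrary V, ⟨0, npos⟩)⟩
    refine ⟨fun u v => ?_⟩
    obtain ⟨g, i⟩ := u; obtain ⟨g', j⟩ := v
    obtain ⟨p⟩ := hG.preconnected g g'
    refine (key g g' p i).trans ?_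
    by_cases hij : i = j
    · subst hij; exact Reachable.refl _
    · exact Adj.reachable ⟨by simp [hij], Or.inl rfl, Or.inr (by simpa using hij)⟩
  refine ⟨hconn, ?_⟩
  rintro ⟨g, i⟩ ⟨g', j⟩ hdist
  have huv : ((g, i) : V × Fin n) ≠ (g', j) := by
    intro h
    rw [h] at hdist
    simp [SimpleGraph.dist_self] at hdist
  have hnadj : ¬ H.Adj (g, i) (g', j) := by
    intro h
    have h1 : H.dist (g, i) (g', j) ≤ (Walk.cons h Walk.nil).length :=
      SimpleGraph.dist_le _
    simp [hdist] at h1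
  have hgg : g ≠ g' := by
    rintro rfl
    have hij : i ≠ j := fun h => huv (by rw [h])
    exact hnadj ⟨huv, Or.inl rfl, Or.inr (by simpa using hij)⟩
  have hnGadj : ¬ G.Adj g g' := by
    intro h
    exact hnadj ⟨huv, Or.inr h, topAdj i j⟩
  obtain ⟨p, hp⟩ := hconn.exists_walk_length_eq_dist (g, i) (g', j)
  rw [hdist] at hp
  cases p with
  | nil => simp at hp
  | cons h1 q =>
    cases q with
    | nil => simp at hp
    | cons h2 r =>
      cases r with
      | cons h3 s => simp [Walk.length_cons] at hp
      | nil =>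
        rename_i w
        obtain ⟨m, k⟩ := w
        have hgm : G.Adj g m := by
          rcases h1.2.1 with h | h
          · subst h
            rcases h2.2.1 with h' | h'
            · exact absurd h' hgg
            · exact absurd h' hnGadj
          · exact h
        have hmg : G.Adj m g' := by
          rcases h2.2.1 with h | h
          · have h' : m = g' := h
            subst h'
            exact absurd hgm hnGadj
          · exact h
        haveI : Nontrivial (Fin n) := Fin.nontrivial_iff_two_le.mpr hn
        obtain ⟨k', hk'k⟩ := exists_ne k
        have hkk' : k ≠ k' := hk'k.symm
        refine ⟨(m, k), (m, k'), by simp [hkk'], huv, ?_, ?_, ?_, ?_, ?_⟩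
        · exact ⟨by simp [hkk'], Or.inl rfl, Or.inr (by simpa using hkk')⟩
        · exact ⟨by simp [hgm.ne], Or.inr hgm, topAdj i k⟩
        · exact ⟨by simp [hgm.ne], Or.inr hgm, topAdj i k'⟩
        · exact ⟨by simp [hmg.ne'], Or.inr hmg.symm, topAdj j k⟩
        · exact ⟨by simp [hmg.ne'], Or.inr hmg.symm, topAdj j k'⟩
end

section
/- For all integers n ≥ 3 and m ≥ 1, the graph H_{n,m} is edge-critical and has diameter exactly 2. Here H_{n,m} is obtained from the disjoint union of the complete bipartite graph K_{n,m} (with parts A of size n and B of size m) and the complete graph K_n by adding a perfect matching between the vertices of K_n and the vertices of A. -/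
open SimpleGraph

universe u

variable {V : Type*}

/-- The graph `H_{n,m}`: the disjoint union of the complete bipartite graph `K_{n,m}`
(with parts `A` of size `n` — the first summand — and `B` of size `m` — the middle
summand) and the complete graph `K_n` (the last summand), together with a perfect
matching between the vertices of `K_n` and the vertices of `A`. -/
def Hnm (n m : ℕ) : SimpleGraph (Fin n ⊕ (Fin m ⊕ Fin n)) :=
  SimpleGraph.fromRel (fun x y =>
    match x, y with
    | Sum.inl _, Sum.inr (Sum.inl _) => True
    | Sum.inr (Sum.inr _), Sum.inr (Sum.inr _) => True
    | Sum.inl i, Sum.inr (Sum.inr j) => i = j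
    | _, _ => False)


section Helpers

variable {G : SimpleGraph V} {u v : V}

lemma edist_le_two_of (w : V) (h1 : G.Adj u w) (h2 : G.Adj w v) : G.edist u v ≤ 2 := by
  have := SimpleGraph.edist_le (Walk.cons h1 (Walk.cons h2 Walk.nil))
  simpa using this

lemma three_le_edist (hne : u ≠ v) (hadj : ¬ G.Adj u v)
    (hcn : ∀ w, G.Adj u w → ¬ G.Adj w v) : 3 ≤ G.edist u v := by
  by_contra h
  push_neg at h
  have htop : G.edist u v ≠ ⊤ := h.ne_top
  obtain ⟨p, hp⟩ := SimpleGraph.exists_walk_of_edist_ne_top htop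
  rw [← hp] at h
  have hl : p.length < 3 := by exact_mod_cast h
  cases p with
  | nil => exact hne rfl
  | cons h1 q =>
    cases q with
    | nil => exact hadj h1
    | cons h2 r =>
      cases r with
      | nil => exact hcn _ h1 h2
      | cons h3 s => simp [Walk.length_cons] at hl; omega

lemma two_le_edist (hne : u ≠ v) (hadj : ¬ G.Adj u v) : 2 ≤ G.edist u v := by
  by_contra h
  push_neg at h
  have htop : G.edist u v ≠ ⊤ := h.ne_top
  obtain ⟨p, hp⟩ := SimpleGraph.exists_walk_of_edist_ne_top htop
  rw [← hp] at h
  have hl : p.length < 2 := by exact_mod_cast h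
  cases p with
  | nil => exact hne rfl
  | cons h1 q =>
    cases q with
    | nil => exact hadj h1
    | cons h2 r => simp [Walk.length_cons] at hl

lemma crit_symm {x y : V} (h : IsDistCriticalEdge G x y) : IsDistCriticalEdge G y x := by
  obtain ⟨u, v, hne, hlt⟩ := h
  refine ⟨u, v, ?_, ?_⟩
  · rwa [Set.pair_comm y x]
  · rwa [Sym2.eq_swap]

lemma crit_of {x y u v : V} (hset : ({u, v} : Set V) ≠ ({x, y} : Set V))
    (w : V) (h1 : G.Adj u w) (h2 : G.Adj w v)
    (hne : u ≠ v) (hadj : ¬ G.Adj u v)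
    (hcn : ∀ z, (G.deleteEdges {s(x, y)}).Adj u z →
      ¬ (G.deleteEdges {s(x, y)}).Adj z v) :
    IsDistCriticalEdge G x y := by
  refine ⟨u, v, hset, ?_⟩
  have hle := edist_le_two_of w h1 h2
  have hadj' : ¬ (G.deleteEdges {s(x, y)}).Adj u v := fun h =>
    hadj ((SimpleGraph.deleteEdges_le _) h)
  have hge := three_le_edist hne hadj' hcn
  exact lt_of_le_of_lt hle (lt_of_lt_of_le (by norm_num) hge)

end Helpers

section HnmCrit

lemma critAB (n m : ℕ) (hn : 3 ≤ n) (i : Fin n) (j : Fin m) :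
    IsDistCriticalEdge (Hnm n m) (Sum.inl i) (Sum.inr (Sum.inl j)) := by
  apply crit_of (w := Sum.inl i)
    (u := (Sum.inr (Sum.inl j) : Fin n ⊕ (Fin m ⊕ Fin n))) (v := Sum.inr (Sum.inr i))
  · intro h
    have : (Sum.inr (Sum.inr i) : Fin n ⊕ (Fin m ⊕ Fin n)) ∈
        ({Sum.inl i, Sum.inr (Sum.inl j)} : Set (Fin n ⊕ (Fin m ⊕ Fin n))) := by
      rw [← h]; simp
    simp at this
  · simp [Hnm]
  · simp [Hnm]
  · simp
  · simp [Hnm]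
  · intro z hz1 hz2
    rcases z with k | (k | k)
    · simp [Hnm, SimpleGraph.deleteEdges_adj] at hz1 hz2
      simp_all
    · simp [Hnm, SimpleGraph.deleteEdges_adj] at hz1
    · simp [Hnm, SimpleGraph.deleteEdges_adj] at hz1

lemma critAC (n m : ℕ) (hn : 3 ≤ n) (hm : 1 ≤ m) (i : Fin n) :
    IsDistCriticalEdge (Hnm n m) (Sum.inl i) (Sum.inr (Sum.inr i)) := by
  apply crit_of (w := Sum.inl i)
    (u := (Sum.inr (Sum.inl ⟨0, hm⟩) : Fin n ⊕ (Fin m ⊕ Fin n))) (v := Sum.inr (Sum.inr i))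
  · intro h
    have : (Sum.inr (Sum.inl (⟨0, hm⟩ : Fin m)) : Fin n ⊕ (Fin m ⊕ Fin n)) ∈
        ({Sum.inl i, Sum.inr (Sum.inr i)} : Set (Fin n ⊕ (Fin m ⊕ Fin n))) := by
      rw [← h]; simp
    simp at this
  · simp [Hnm]
  · simp [Hnm]
  · simp
  · simp [Hnm]
  · intro z hz1 hz2
    rcases z with k | (k | k)
    · simp [Hnm, SimpleGraph.deleteEdges_adj] at hz1 hz2
    · simp [Hnm, SimpleGraph.deleteEdges_adj] at hz1
    · simp [Hnm, SimpleGraph.deleteEdges_adj] at hz1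

lemma critCC (n m : ℕ) (hn : 3 ≤ n) (i j : Fin n) (hij : i ≠ j) :
    IsDistCriticalEdge (Hnm n m) (Sum.inr (Sum.inr i)) (Sum.inr (Sum.inr j)) := by
  apply crit_of (w := Sum.inr (Sum.inr i))
    (u := (Sum.inl i : Fin n ⊕ (Fin m ⊕ Fin n))) (v := Sum.inr (Sum.inr j))
  · intro h
    have : (Sum.inl i : Fin n ⊕ (Fin m ⊕ Fin n)) ∈
        ({Sum.inr (Sum.inr i), Sum.inr (Sum.inr j)} : Set (Fin n ⊕ (Fin m ⊕ Fin n))) := by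
      rw [← h]; simp
    simp at this
  · simp [Hnm]
  · simp [Hnm, hij]
  · simp
  · simp [Hnm, hij]
  · intro z hz1 hz2
    rcases z with k | (k | k)
    · simp [Hnm, SimpleGraph.deleteEdges_adj] at hz1
    · simp [Hnm, SimpleGraph.deleteEdges_adj] at hz2
    · simp [Hnm, SimpleGraph.deleteEdges_adj] at hz1 hz2
      subst hz1
      tauto

end HnmCrit

/-- For all `n ≥ 3` and `m ≥ 1`, the graph `H_{n,m}` is edge-critical and has
diameter exactly `2`. -/
theorem stmt_17 (n m : ℕ) (hn : 3 ≤ n) (hm : 1 ≤ m) :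
    EdgeCritical (Hnm n m) ∧ (Hnm n m).ediam = 2 := by
  constructor
  · intro x y hxy
    rcases x with i | (i | i) <;> rcases y with j | (j | j)
    · simp [Hnm] at hxy
    · exact critAB n m hn i j
    · simp [Hnm] at hxy
      subst hxy
      exact critAC n m hn hm i
    · exact crit_symm (critAB n m hn j i)
    · simp [Hnm] at hxy
    · simp [Hnm] at hxy
    · simp [Hnm] at hxy
      subst hxy
      first
      | exact crit_symm (critAC n m hn hm i)
      | exact crit_symm (critAC n m hn hm j)
    · simp [Hnm] at hxy
    · simp [Hnm] at hxy
      exact critCC n m hn i j (by simpa using hxy)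
  · apply le_antisymm
    · apply SimpleGraph.ediam_le_of_edist_le
      intro u v
      rcases u with i | (i | i) <;> rcases v with j | (j | j)
      · rcases eq_or_ne i j with rfl | hij
        · simp [SimpleGraph.edist_self]
        · exact edist_le_two_of (Sum.inr (Sum.inl ⟨0, hm⟩)) (by simp [Hnm]) (by simp [Hnm])
      · refine le_trans (le_of_eq (SimpleGraph.edist_eq_one_iff_adj.mpr (by simp [Hnm]))) ?_
        norm_num
      · rcases eq_or_ne i j with rfl | hij
        · refine le_trans (le_of_eq (SimpleGraph.edist_eq_one_iff_adj.mpr (by simp [Hnm]))) ?_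
          norm_num
        · exact edist_le_two_of (Sum.inr (Sum.inr i)) (by simp [Hnm]) (by simp [Hnm, hij])
      · refine le_trans (le_of_eq (SimpleGraph.edist_eq_one_iff_adj.mpr (by simp [Hnm]))) ?_
        norm_num
      · rcases eq_or_ne i j with rfl | hij
        · simp [SimpleGraph.edist_self]
        · exact edist_le_two_of (Sum.inl ⟨0, by omega⟩) (by simp [Hnm]) (by simp [Hnm])
      · exact edist_le_two_of (Sum.inl j) (by simp [Hnm]) (by simp [Hnm])
      · rcases eq_or_ne i j with rfl | hij
        · refine le_trans (le_of_eq (SimpleGraph.edist_eq_one_iff_adj.mpr (by simp [Hnm]))) ?_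
          norm_num
        · exact edist_le_two_of (Sum.inr (Sum.inr j)) (by simp [Hnm, hij]) (by simp [Hnm])
      · exact edist_le_two_of (Sum.inl i) (by simp [Hnm]) (by simp [Hnm])
      · rcases eq_or_ne i j with rfl | hij
        · simp [SimpleGraph.edist_self]
        · refine le_trans (le_of_eq (SimpleGraph.edist_eq_one_iff_adj.mpr (by simp [Hnm, hij]))) ?_
          norm_num
    · refine le_trans ?_ (SimpleGraph.edist_le_ediam
        (u := (Sum.inl ⟨0, by omega⟩ : Fin n ⊕ (Fin m ⊕ Fin n))) (v := Sum.inl ⟨1, by omega⟩))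
      apply two_le_edist
      · simp
      · simp [Hnm]
end
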